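/- arXiv:2003.08066 — 7 statements merged into one kernel-verified Lean document; each statement's English description precedes it below -/
import Mathlib

section
/- Fix an integer n ≥ 1 and p = (p₀,…,p_{n−1}) ∈ [0,1]^n. Then Σ_{Y ∈ Sₙ} ∏_{i=0}^{n−1} p_i^{f_i(Y)} (1−p_i)^{e_i(Y)} = 1 (with the convention 0⁰ = 1); in other words, the assignment Y ↦ ∏_{i=0}^{n−1} p_i^{f_i(Y)} (1−p_i)^{e_i(Y)} is a probability mass function on Sₙ, so it defines a probability distribution X(n,p) on Sₙ (the multi-parameter random simplicial complex model). -/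
open MeasureTheory Finset Filter


/-- A (sub)complex of the complete complex on the vertex type `V`:
a family of finite subsets closed under taking subsets and containing `∅`. -/
def SComplex {V : Type*} [DecidableEq V] (Y : Finset (Finset V)) : Prop :=
  ∅ ∈ Y ∧ ∀ σ ∈ Y, ∀ τ ∈ σ.powerset, τ ∈ Y

instance {V : Type*} [DecidableEq V] :
    DecidablePred (fun Y : Finset (Finset V) => SComplex Y) :=
  fun Y => decidable_of_iff (∅ ∈ Y ∧ ∀ σ ∈ Y, ∀ τ ∈ σ.powerset, τ ∈ Y) Iff.rfl

/-- `scount Y m` = number of simplices of `Y` with `m` vertices (i.e. `(m-1)`-simplices);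
`f_k(Y) = scount Y (k+1)` and `f_{-1}(Y) = scount Y 0`. -/
def scount {V : Type*} (Y : Finset (Finset V)) (m : ℕ) : ℕ :=
  (Y.filter (fun σ => σ.card = m)).card

/-- Number of external `i`-simplices of `Y` in the complete complex on `Fin n`:
`i`-simplices `σ ∉ Y` all of whose strict subsets lie in `Y`. -/
def ecount {n : ℕ} (Y : Finset (Finset (Fin n))) (i : ℕ) : ℕ :=
  (Finset.univ.filter (fun σ : Finset (Fin n) =>
    σ.card = i + 1 ∧ σ ∉ Y ∧ ∀ τ ∈ σ.powerset, τ ≠ σ → τ ∈ Y)).card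

/-- The weight `∏_{i=0}^{n-1} p_i^{f_i(Y)} (1-p_i)^{e_i(Y)}` of the
multi-parameter random simplicial complex model. -/
noncomputable def mpWeight {n : ℕ} (p : Fin n → ℝ) (Y : Finset (Finset (Fin n))) : ℝ :=
  ∏ i : Fin n, p i ^ scount Y (i.1 + 1) * (1 - p i) ^ ecount Y i.1

/-- The probability of an event, as a real number. -/
noncomputable def prb {Ω : Type*} [MeasurableSpace Ω] (μ : Measure Ω) (A : Set Ω) : ℝ :=
  (μ A).toReal

/-- Conditional probability `P(A | B)`, as a real number. -/
noncomputable def condP {Ω : Type*} [MeasurableSpace Ω] (μ : Measure Ω) (A B : Set Ω) : ℝ :=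
  prb μ (A ∩ B) / prb μ B

/-- A random subcomplex is homogeneous if its distribution is invariant under
every permutation of the vertices. -/
def Homogeneous {n : ℕ} {Ω : Type*} [MeasurableSpace Ω] (μ : Measure Ω)
    (X : Ω → Finset (Finset (Fin n))) : Prop :=
  ∀ (g : Equiv.Perm (Fin n)) (Y : Finset (Finset (Fin n))),
    prb μ {ω | Finset.image (fun σ => σ.image (⇑g)) (X ω) = Y} = prb μ {ω | X ω = Y}

/-- Spatial independence of a random subcomplex. -/
def SpatInd {n : ℕ} {Ω : Type*} [MeasurableSpace Ω] (μ : Measure Ω)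
    (X : Ω → Finset (Finset (Fin n))) : Prop :=
  ∀ Y₁ Y₂ : Finset (Finset (Fin n)), SComplex Y₁ → SComplex Y₂ →
    prb μ {ω | Y₁ ∪ Y₂ ⊆ X ω} * prb μ {ω | Y₁ ∩ Y₂ ⊆ X ω} =
      prb μ {ω | Y₁ ⊆ X ω} * prb μ {ω | Y₂ ⊆ X ω}

/-- The `k`-dimensional standard simplex `{0, 1, …, k}` in `Fin n`
(for `k = -1` this is the empty simplex). -/
def stdSimp (n : ℕ) (k : ℤ) : Finset (Fin n) :=
  Finset.univ.filter (fun v => (v : ℤ) ≤ k)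

/-- The `k`-dimensional simplex `{1, 2, …, k+1}` in `Fin n`,
sharing `k` vertices with `stdSimp n k`. -/
def stdSimp' (n : ℕ) (k : ℕ) : Finset (Fin n) :=
  Finset.univ.filter (fun v => 1 ≤ (v : ℕ) ∧ (v : ℕ) ≤ k + 1)

/-- The parameter `q_k = P(τ ∈ X)` for a `k`-simplex `τ` (with `q_{-1} = 1`). -/
noncomputable def qpar {n : ℕ} {Ω : Type*} [MeasurableSpace Ω] (μ : Measure Ω)
    (X : Ω → Finset (Finset (Fin n))) (k : ℤ) : ℝ :=
  if k < 0 then 1 else prb μ {ω | stdSimp n k ∈ X ω}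

/-- The parameter `r_k = P(σ ∈ X | τ ∈ X)` for a `(k+1)`-simplex `σ` containing the
`k`-simplex `τ`, if `q_k > 0`, and `0` otherwise (with `r_{-1} = q_0`). -/
noncomputable def rpar {n : ℕ} {Ω : Type*} [MeasurableSpace Ω] (μ : Measure Ω)
    (X : Ω → Finset (Finset (Fin n))) (k : ℤ) : ℝ :=
  if 0 < qpar μ X k then
    condP μ {ω | stdSimp n (k + 1) ∈ X ω} {ω | stdSimp n k ∈ X ω}
  else 0

/-- The parameter `s_k = P(τ₁ ∪ τ₂ ∈ X | τ₁ ∈ X, τ₂ ∈ X)` for `k`-simplices `τ₁, τ₂`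
sharing `k` vertices, if `P(τ₁ ∈ X, τ₂ ∈ X) > 0`, and `0` otherwise. -/
noncomputable def spar {n : ℕ} {Ω : Type*} [MeasurableSpace Ω] (μ : Measure Ω)
    (X : Ω → Finset (Finset (Fin n))) (k : ℕ) : ℝ :=
  if 0 < prb μ ({ω | stdSimp n k ∈ X ω} ∩ {ω | stdSimp' n k ∈ X ω}) then
    condP μ {ω | stdSimp n (k + 1) ∈ X ω}
      ({ω | stdSimp n k ∈ X ω} ∩ {ω | stdSimp' n k ∈ X ω})
  else 0

/-!
Give every nonempty simplex `σ` an independent coin that succeeds with probability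
`p_{dim σ}`, and let `Y` be the largest complex all of whose nonempty simplices succeeded.
The coins have total mass `∏ (p_σ + (1 - p_σ)) = 1`. The outcomes producing a given complex
`Y` are exactly those in which every nonempty simplex of `Y` succeeds and every external simplex
of `Y` fails, the other coins being free; summing them out leaves
`∏_{σ ∈ Y} p_σ ∏_{σ ext} (1 - p_σ)`, the weight of `Y`.
-/

theorem Finset.sum_Icc_prod_mul_prod_one_sub {α R : Type*} [DecidableEq α] [CommRing R]
    {s t u : Finset α} (hst : s ⊆ t) (htu : t ⊆ u) (f : α → R) :
    ∑ ω ∈ Icc s t, (∏ i ∈ ω, f i) * ∏ i ∈ u \ ω, (1 - f i) =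
      (∏ i ∈ s, f i) * ∏ i ∈ u \ t, (1 - f i) := by
  have hdisj : ∀ r ∈ (t \ s).powerset, Disjoint s r := fun r hr =>
    disjoint_sdiff.mono_right (mem_powerset.1 hr)
  have hinj : Set.InjOn (s ∪ ·) ((t \ s).powerset : Set (Finset α)) := fun r hr r' hr' h => by
    rw [← union_sdiff_cancel_left (hdisj r hr), ← union_sdiff_cancel_left (hdisj r' hr')]
    exact congrArg (· \ s) h
  have hcompl : ∀ r ∈ (t \ s).powerset, u \ (s ∪ r) = (u \ t) ∪ ((t \ s) \ r) := by
    intro r hr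
    have hrt := mem_powerset.1 hr
    ext x
    simp only [mem_sdiff, mem_union]
    grind
  rw [Icc_eq_image_powerset hst, sum_image hinj]
  calc ∑ r ∈ (t \ s).powerset, (∏ i ∈ s ∪ r, f i) * ∏ i ∈ u \ (s ∪ r), (1 - f i)
      = ∑ r ∈ (t \ s).powerset, ((∏ i ∈ s, f i) * ∏ i ∈ u \ t, (1 - f i)) *
          ((∏ i ∈ r, f i) * ∏ i ∈ (t \ s) \ r, (1 - f i)) := by
        refine sum_congr rfl fun r hr => ?_
        rw [prod_union (hdisj r hr), hcompl r hr, prod_union]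
        · ring
        · exact disjoint_sdiff_self_left.mono_right (sdiff_subset.trans sdiff_subset)
    _ = (∏ i ∈ s, f i) * ∏ i ∈ u \ t, (1 - f i) := by
        rw [← mul_sum, ← prod_add]
        simp

theorem scount_erase_empty {V : Type*} [DecidableEq V] (Y : Finset (Finset V)) {m : ℕ}
    (hm : m ≠ 0) :
    scount (Y.erase ∅) m = scount Y m := by
  rw [scount, scount, filter_erase, erase_eq_of_notMem]
  simp [hm.symm]

variable {V : Type*} [Fintype V] [DecidableEq V]

def maxSubcomplex (ω : Finset (Finset V)) : Finset (Finset V) :=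
  {σ | ∀ τ ⊆ σ, τ ≠ ∅ → τ ∈ ω}

def externalFaces (Y : Finset (Finset V)) : Finset (Finset V) :=
  {σ | σ ∉ Y ∧ ∀ τ ∈ σ.powerset, τ ≠ σ → τ ∈ Y}

theorem sComplex_maxSubcomplex (ω : Finset (Finset V)) : SComplex (maxSubcomplex ω) := by
  refine ⟨by simp [maxSubcomplex], fun σ hσ τ hτ => ?_⟩
  simp only [maxSubcomplex, mem_filter, mem_univ, true_and] at hσ ⊢
  exact fun ρ hρ => hσ ρ (hρ.trans (mem_powerset.1 hτ))

theorem exists_mem_externalFaces_subset {Y : Finset (Finset V)} {σ : Finset V} (hσ : σ ∉ Y) :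
    ∃ τ ∈ externalFaces Y, τ ⊆ σ := by
  obtain ⟨τ, hτσ, hτ⟩ := exists_minimal_le_of_wellFoundedLT (· ∉ Y) σ hσ
  refine ⟨τ, ?_, hτσ⟩
  simp only [externalFaces, mem_filter, mem_univ, true_and, mem_powerset]
  exact ⟨hτ.prop, fun ρ hρτ hne => not_not.1 (hτ.not_prop_of_lt (lt_of_le_of_ne hρτ hne))⟩

theorem maxSubcomplex_eq_iff {Y : Finset (Finset V)} (hY : SComplex Y) (ω : Finset (Finset V)) :
    maxSubcomplex ω = Y ↔ Y.erase ∅ ⊆ ω ∧ Disjoint ω (externalFaces Y) := by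
  constructor
  · rintro rfl
    simp only [externalFaces, maxSubcomplex, disjoint_left, mem_filter, mem_univ, true_and,
      mem_powerset]
    refine ⟨fun σ hσ => ?_, fun σ hσ ⟨hσY, hfaces⟩ => hσY fun τ hτσ hτ => ?_⟩
    · rw [mem_erase, mem_filter] at hσ
      exact hσ.2.2 σ subset_rfl hσ.1
    rcases eq_or_ne τ σ with rfl | hne
    · exact hσ
    · exact hfaces τ hτσ hne τ subset_rfl hτ
  · rintro ⟨hYω, hext⟩
    ext σ
    simp only [maxSubcomplex, mem_filter, mem_univ, true_and]
    refine ⟨fun hσ => by_contra fun hσY => ?_,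
      fun hσ τ hτσ hτ => hYω (mem_erase.2 ⟨hτ, hY.2 σ hσ τ (mem_powerset.2 hτσ)⟩)⟩
    obtain ⟨τ, hτ, hτσ⟩ := exists_mem_externalFaces_subset hσY
    have hτne : τ ≠ ∅ := fun h => (mem_filter.1 hτ).2.1 (h ▸ hY.1)
    exact disjoint_left.1 hext (hσ τ hτσ hτne) hτ

theorem externalFaces_subset_erase_empty {Y : Finset (Finset V)} (hY : ∅ ∈ Y) :
    externalFaces Y ⊆ univ.erase ∅ :=
  fun σ hσ => mem_erase.2 ⟨fun h => (mem_filter.1 hσ).2.1 (h ▸ hY), mem_univ σ⟩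

theorem filter_powerset_maxSubcomplex_eq {Y : Finset (Finset V)} (hY : SComplex Y) :
    {ω ∈ ((univ : Finset (Finset V)).erase ∅).powerset | maxSubcomplex ω = Y} =
      Icc (Y.erase ∅) (univ.erase ∅ \ externalFaces Y) := by
  ext ω
  rw [mem_filter, mem_powerset, maxSubcomplex_eq_iff hY, mem_Icc, subset_sdiff]
  tauto

variable {n : ℕ}

theorem scount_externalFaces (Y : Finset (Finset (Fin n))) (i : ℕ) :
    scount (externalFaces Y) (i + 1) = ecount Y i := by
  simp only [scount, ecount, externalFaces, filter_filter, and_comm]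

theorem prod_card_eq_prod_pow_scount {M : Type*} [CommMonoid M] (q : ℕ → M)
    {S : Finset (Finset (Fin n))} (hS : ∅ ∉ S) :
    ∏ σ ∈ S, q #σ = ∏ i : Fin n, q (i + 1) ^ scount S (i + 1) := by
  have hmaps : ∀ σ ∈ S, #σ ∈ univ.image (fun i : Fin n => i.1 + 1) := by
    intro σ hσ
    have hpos : 0 < #σ := card_pos.2 (nonempty_iff_ne_empty.2 fun h => hS (h ▸ hσ))
    have hle : #σ ≤ n := by simpa using card_le_univ σ
    exact mem_image.2 ⟨⟨#σ - 1, by omega⟩, mem_univ _, by simp only; omega⟩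
  rw [← prod_fiberwise_of_maps_to' hmaps,
    prod_image fun i _ j _ h => Fin.ext (by simpa using h)]
  simp only [prod_const, scount]

noncomputable def paramByCard (p : Fin n → ℝ) : ℕ → ℝ :=
  Function.extend (fun i : Fin n => i.1 + 1) p 0

theorem paramByCard_succ (p : Fin n → ℝ) (i : Fin n) : paramByCard p (i + 1) = p i :=
  Function.Injective.extend_apply (fun _ _ h => Fin.ext (Nat.succ_injective h)) p 0 i

theorem sum_filter_maxSubcomplex_eq_mpWeight (p : Fin n → ℝ) {Y : Finset (Finset (Fin n))}
    (hY : SComplex Y) :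
    ∑ ω ∈ ((univ : Finset (Finset (Fin n))).erase ∅).powerset with maxSubcomplex ω = Y,
        (∏ σ ∈ ω, paramByCard p #σ) * ∏ σ ∈ univ.erase ∅ \ ω, (1 - paramByCard p #σ) =
      mpWeight p Y := by
  have hext := externalFaces_subset_erase_empty hY.1
  have hYext : Y.erase ∅ ⊆ univ.erase ∅ \ externalFaces Y := subset_sdiff.2
    ⟨erase_subset_erase _ (subset_univ Y),
      disjoint_left.2 fun σ hσ hσ' => (mem_filter.1 hσ').2.1 (mem_of_mem_erase hσ)⟩
  rw [filter_powerset_maxSubcomplex_eq hY,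
    sum_Icc_prod_mul_prod_one_sub hYext sdiff_subset,
    Finset.sdiff_sdiff_eq_self hext, prod_card_eq_prod_pow_scount _ (notMem_erase ∅ Y),
    prod_card_eq_prod_pow_scount (fun m => 1 - paramByCard p m)
      fun h => (mem_erase.1 (hext h)).1 rfl,
    ← prod_mul_distrib]
  refine prod_congr rfl fun i _ => ?_
  rw [paramByCard_succ, scount_erase_empty Y i.1.succ_ne_zero, scount_externalFaces]

theorem multiParam_weights_sum_to_one_general (n : ℕ) (p : Fin n → ℝ) :
    ∑ Y ∈ Finset.univ.filter (fun Y : Finset (Finset (Fin n)) => SComplex Y),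
      mpWeight p Y = 1 := by
  let E : Finset (Finset (Fin n)) := univ.erase ∅
  let w : Finset (Finset (Fin n)) → ℝ := fun ω =>
    (∏ σ ∈ ω, paramByCard p #σ) * ∏ σ ∈ E \ ω, (1 - paramByCard p #σ)
  calc _ = ∑ Y ∈ univ.filter (fun Y => SComplex Y),
          ∑ ω ∈ E.powerset with maxSubcomplex ω = Y, w ω :=
        sum_congr rfl fun Y hY =>
          (sum_filter_maxSubcomplex_eq_mpWeight p (mem_filter.1 hY).2).symm
    _ = ∑ ω ∈ E.powerset, w ω :=
        sum_fiberwise_of_maps_to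
          (fun ω _ => mem_filter.2 ⟨mem_univ _, sComplex_maxSubcomplex ω⟩) w
    _ = ∏ σ ∈ E, (paramByCard p #σ + (1 - paramByCard p #σ)) := (prod_add _ _ _).symm
    _ = 1 := by simp

/-- the multi-parameter weights form a probability mass function on `Sₙ`. -/
theorem multiParam_weights_sum_to_one (n : ℕ) (hn : 1 ≤ n) (p : Fin n → ℝ)
    (hp : ∀ i, p i ∈ Set.Icc (0 : ℝ) 1) :
    ∑ Y ∈ Finset.univ.filter (fun Y : Finset (Finset (Fin n)) => SComplex Y),
      mpWeight p Y = 1 :=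
  multiParam_weights_sum_to_one_general n p
end

section
/- Fix an integer n ≥ 1 and p = (p₀,…,p_{n−1}) ∈ [0,1]^n, and let X ~ X(n,p) be a multi-parameter random simplicial complex. Then X is homogeneous and spatially independent. -/
open MeasureTheory Finset Filter


namespace Aux

variable {n : ℕ}

/-- external simplices of `Z` (nonempty). -/
def extS (Z : Finset (Finset (Fin n))) : Finset (Finset (Fin n)) :=
  Finset.univ.filter (fun σ => σ ≠ ∅ ∧ σ ∉ Z ∧ ∀ τ ∈ σ.powerset, τ ≠ σ → τ ∈ Z)

noncomputable def wgt (A B : ℕ → ℝ) (U Z : Finset (Finset (Fin n))) : ℝ :=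
  (∏ σ ∈ Z.filter (fun σ => σ ≠ ∅), A (σ.card - 1)) *
  ∏ σ ∈ (extS Z ∩ U), B (σ.card - 1)

lemma key_self (A B : ℕ → ℝ) (Y : Finset (Finset (Fin n))) (hY : SComplex Y) :
    ∑ Z ∈ Finset.univ.filter (fun Z => SComplex Z ∧ Y ⊆ Z ∧ Z ⊆ Y), wgt A B Y Z
      = ∏ σ ∈ Y.filter (fun σ => σ ≠ ∅), A (σ.card - 1) := by
  have hfil : Finset.univ.filter (fun Z : Finset (Finset (Fin n)) => SComplex Z ∧ Y ⊆ Z ∧ Z ⊆ Y)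
      = {Y} := by
    ext Z
    simp only [Finset.mem_filter, Finset.mem_univ, true_and, Finset.mem_singleton]
    constructor
    · rintro ⟨_, h1, h2⟩; exact Finset.Subset.antisymm h2 h1
    · rintro rfl; exact ⟨hY, Finset.Subset.refl _, Finset.Subset.refl _⟩
  rw [hfil, Finset.sum_singleton]
  have hext : extS Y ∩ Y = (∅ : Finset (Finset (Fin n))) := by
    ext σ
    simp only [Finset.mem_inter, extS, Finset.mem_filter, Finset.mem_univ, true_and,
      Finset.notMem_empty, iff_false]
    rintro ⟨⟨_, h2, _⟩, h4⟩; exact h2 h4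
  rw [wgt, hext, Finset.prod_empty, mul_one]

lemma key_sum (A B : ℕ → ℝ) (hAB : ∀ m, A m + B m = 1) :
    ∀ N : ℕ, ∀ U Y : Finset (Finset (Fin n)), (U \ Y).card ≤ N →
      SComplex U → SComplex Y → Y ⊆ U →
      ∑ Z ∈ Finset.univ.filter (fun Z => SComplex Z ∧ Y ⊆ Z ∧ Z ⊆ U), wgt A B U Z
        = ∏ σ ∈ Y.filter (fun σ => σ ≠ ∅), A (σ.card - 1) := by
  intro N
  induction N with
  | zero =>
    intro U Y hcard hU hY hYU
    have : U = Y := by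
      have h0 : (U \ Y) = ∅ := Finset.card_eq_zero.mp (Nat.le_zero.mp hcard)
      exact Finset.Subset.antisymm (by
        intro x hx
        by_contra hxY
        exact absurd (Finset.mem_sdiff.mpr ⟨hx, hxY⟩) (by simp [h0])) hYU
    subst this
    exact key_self A B U hU
  | succ N ih =>
    intro U Y hcard hU hY hYU
    by_cases hUY : U = Y
    · subst hUY; exact key_self A B U hU
    -- pick minimal σ ∈ U \ Y
    have hne : (U \ Y).Nonempty := by
      rw [Finset.nonempty_iff_ne_empty]
      intro h0
      exact hUY (Finset.Subset.antisymm (fun x hx => by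
        by_contra hxY
        exact absurd (Finset.mem_sdiff.mpr ⟨hx, hxY⟩) (by simp [h0])) hYU)
    obtain ⟨σ, hσ, hσmin⟩ := Finset.exists_min_image (U \ Y) Finset.card hne
    have hσU : σ ∈ U := (Finset.mem_sdiff.mp hσ).1
    have hσY : σ ∉ Y := (Finset.mem_sdiff.mp hσ).2
    have hσne : σ ≠ ∅ := fun h => hσY (h ▸ hY.1)
    have hfaces : ∀ τ ∈ σ.powerset, τ ≠ σ → τ ∈ Y := by
      intro τ hτ hτne
      have hτσ : τ ⊆ σ := Finset.mem_powerset.mp hτ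
      by_contra hτY
      have hτU : τ ∈ U := hU.2 σ hσU τ hτ
      have := hσmin τ (Finset.mem_sdiff.mpr ⟨hτU, hτY⟩)
      have hlt : τ.card < σ.card := Finset.card_lt_card (Finset.ssubset_iff_subset_ne.mpr ⟨hτσ, hτne⟩)
      omega
    set Y' := insert σ Y with hY'def
    have hY' : SComplex Y' := by
      refine ⟨Finset.mem_insert_of_mem hY.1, ?_⟩
      intro ρ hρ τ hτ
      rcases Finset.mem_insert.mp hρ with h | h
      · rw [h] at hτ
        by_cases hτσ : τ = σ
        · exact hτσ ▸ Finset.mem_insert_self _ _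
        · exact Finset.mem_insert_of_mem (hfaces τ hτ hτσ)
      · exact Finset.mem_insert_of_mem (hY.2 ρ h τ hτ)
    set U' := U.filter (fun τ => ¬ σ ⊆ τ) with hU'def
    have hσU' : σ ∉ U' := by
      intro h
      exact (Finset.mem_filter.mp h).2 (Finset.Subset.refl σ)
    have hU'U : U' ⊆ U := Finset.filter_subset _ _
    have hU' : SComplex U' := by
      constructor
      · refine Finset.mem_filter.mpr ⟨hU.1, ?_⟩
        intro hsub
        exact hσne (Finset.subset_empty.mp hsub)
      · intro ρ hρ τ hτ
        have hρU := Finset.mem_filter.mp hρ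
        refine Finset.mem_filter.mpr ⟨hU.2 ρ hρU.1 τ hτ, ?_⟩
        intro hστ
        exact hρU.2 (hστ.trans (Finset.mem_powerset.mp hτ))
    have hYU' : Y ⊆ U' := by
      intro τ hτ
      refine Finset.mem_filter.mpr ⟨hYU hτ, ?_⟩
      intro hστ
      exact hσY (hY.2 τ hτ σ (Finset.mem_powerset.mpr hστ))
    have hcard1 : (U \ Y').card ≤ N := by
      have : U \ Y' = (U \ Y).erase σ := by
        ext x; simp [hY'def, Finset.mem_sdiff, Finset.mem_erase, and_comm]; tauto
      rw [this, Finset.card_erase_of_mem hσ]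
      omega
    have hcard2 : (U' \ Y).card ≤ N := by
      have hsub : U' \ Y ⊆ (U \ Y).erase σ := by
        intro x hx
        rw [Finset.mem_sdiff] at hx
        refine Finset.mem_erase.mpr ⟨?_, Finset.mem_sdiff.mpr ⟨hU'U hx.1, hx.2⟩⟩
        rintro rfl; exact hσU' hx.1
      have := Finset.card_le_card hsub
      rw [Finset.card_erase_of_mem hσ] at this
      omega
    have hYU'sub : Y' ⊆ U := Finset.insert_subset hσU hYU
    -- split the sum
    rw [← Finset.sum_filter_add_sum_filter_not
      (Finset.univ.filter (fun Z => SComplex Z ∧ Y ⊆ Z ∧ Z ⊆ U)) (fun Z => σ ∈ Z) (wgt A B U)]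
    have e1 : (Finset.univ.filter (fun Z : Finset (Finset (Fin n)) => SComplex Z ∧ Y ⊆ Z ∧ Z ⊆ U)).filter
        (fun Z => σ ∈ Z)
        = Finset.univ.filter (fun Z => SComplex Z ∧ Y' ⊆ Z ∧ Z ⊆ U) := by
      rw [Finset.filter_filter]
      apply Finset.filter_congr
      intro Z _
      simp only [hY'def, Finset.insert_subset_iff]
      tauto
    have e2 : (Finset.univ.filter (fun Z : Finset (Finset (Fin n)) => SComplex Z ∧ Y ⊆ Z ∧ Z ⊆ U)).filter
        (fun Z => σ ∉ Z)
        = Finset.univ.filter (fun Z => SComplex Z ∧ Y ⊆ Z ∧ Z ⊆ U') := by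
      rw [Finset.filter_filter]
      apply Finset.filter_congr
      intro Z _
      constructor
      · rintro ⟨⟨hZ, hYZ, hZU⟩, hσZ⟩
        refine ⟨hZ, hYZ, ?_⟩
        intro τ hτ
        refine Finset.mem_filter.mpr ⟨hZU hτ, ?_⟩
        intro hστ
        exact hσZ (hZ.2 τ hτ σ (Finset.mem_powerset.mpr hστ))
      · rintro ⟨hZ, hYZ, hZU'⟩
        exact ⟨⟨hZ, hYZ, hZU'.trans hU'U⟩, fun hσZ => hσU' (hZU' hσZ)⟩
    rw [e1, e2]
    -- second sum: wgt A B U Z = B k * wgt A B U' Z on this set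
    have hsum2 : ∑ Z ∈ Finset.univ.filter (fun Z => SComplex Z ∧ Y ⊆ Z ∧ Z ⊆ U'), wgt A B U Z
        = B (σ.card - 1) *
          ∑ Z ∈ Finset.univ.filter (fun Z => SComplex Z ∧ Y ⊆ Z ∧ Z ⊆ U'), wgt A B U' Z := by
      rw [Finset.mul_sum]
      apply Finset.sum_congr rfl
      intro Z hZmem
      obtain ⟨hZ, hYZ, hZU'⟩ := (Finset.mem_filter.mp hZmem).2
      have hσZ : σ ∉ Z := fun h => hσU' (hZU' h)
      have hσext : σ ∈ extS Z := by
        refine Finset.mem_filter.mpr ⟨Finset.mem_univ _, hσne, hσZ, ?_⟩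
        intro τ hτ hτne
        exact hYZ (hfaces τ hτ hτne)
      have hins : extS Z ∩ U = insert σ (extS Z ∩ U') := by
        ext τ
        simp only [Finset.mem_inter, Finset.mem_insert]
        constructor
        · rintro ⟨hτe, hτU⟩
          by_cases hτσ : τ = σ
          · exact Or.inl hτσ
          · refine Or.inr ⟨hτe, Finset.mem_filter.mpr ⟨hτU, ?_⟩⟩
            intro hστ
            obtain ⟨_, _, hext⟩ := (Finset.mem_filter.mp hτe).2
            exact hσZ (hext σ (Finset.mem_powerset.mpr hστ) (fun h => hτσ h.symm))
        · rintro (rfl | ⟨hτe, hτU'⟩)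
          · exact ⟨hσext, hσU⟩
          · exact ⟨hτe, hU'U hτU'⟩
      have hσnotmem : σ ∉ extS Z ∩ U' := fun h => hσU' (Finset.mem_inter.mp h).2
      rw [wgt, wgt, hins, Finset.prod_insert hσnotmem]
      ring
    rw [hsum2, ih U Y' hcard1 hU hY' hYU'sub, ih U' Y hcard2 hU' hY hYU']
    have hfY' : Y'.filter (fun σ => σ ≠ ∅) = insert σ (Y.filter (fun σ => σ ≠ ∅)) := by
      rw [hY'def, Finset.filter_insert, if_pos hσne]
    have hσnotmemY : σ ∉ Y.filter (fun σ => σ ≠ ∅) := fun h => hσY (Finset.mem_filter.mp h).1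
    rw [hfY', Finset.prod_insert hσnotmemY]
    rw [← add_mul, hAB, one_mul]


noncomputable def Phat (c : Fin n → ℝ) (m : ℕ) : ℝ := if h : m < n then c ⟨m, h⟩ else 1

lemma prod_pow_card (hn : 0 < n) (c : Fin n → ℝ) (S : Finset (Finset (Fin n)))
    (hS : ∀ σ ∈ S, σ ≠ ∅) :
    ∏ i : Fin n, c i ^ (S.filter (fun σ => σ.card = i.1 + 1)).card
      = ∏ σ ∈ S, Phat c (σ.card - 1) := by
  have hmap : ∀ σ ∈ S, (⟨(σ.card - 1) % n, Nat.mod_lt _ hn⟩ : Fin n) ∈ Finset.univ :=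
    fun _ _ => Finset.mem_univ _
  rw [← Finset.prod_fiberwise_of_maps_to hmap (fun σ => Phat c (σ.card - 1))]
  apply Finset.prod_congr rfl
  intro i _
  have hcard : ∀ σ ∈ S, σ.card ≤ n := fun σ _ => by
    simpa using Finset.card_le_univ σ
  have hfil : S.filter (fun σ => (⟨(σ.card - 1) % n, Nat.mod_lt _ hn⟩ : Fin n) = i)
      = S.filter (fun σ => σ.card = i.1 + 1) := by
    apply Finset.filter_congr
    intro σ hσ
    have h1 : 1 ≤ σ.card := Finset.card_pos.mpr (Finset.nonempty_iff_ne_empty.mpr (hS σ hσ))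
    have h2 : σ.card ≤ n := hcard σ hσ
    have hm : (σ.card - 1) % n = σ.card - 1 := Nat.mod_eq_of_lt (by omega)
    constructor
    · intro h
      have := congrArg Fin.val h
      simp only [hm] at this
      omega
    · intro h
      apply Fin.ext
      show (σ.card - 1) % n = i.1
      rw [hm]
      omega
  rw [hfil]
  rw [Finset.prod_congr rfl (g := fun _ => c i) ?_, Finset.prod_const]
  intro σ hσ
  have hσS := (Finset.mem_filter.mp hσ).1
  have hc := (Finset.mem_filter.mp hσ).2
  have h2 : σ.card ≤ n := hcard σ hσS
  have hlt : σ.card - 1 < n := i.2.trans_le' (by omega)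
  rw [Phat, dif_pos hlt]
  congr 1
  apply Fin.ext
  simp only [hc]
  omega

lemma cx_univ : SComplex (Finset.univ : Finset (Finset (Fin n))) :=
  ⟨Finset.mem_univ _, fun _ _ _ _ => Finset.mem_univ _⟩

lemma mpWeight_eq_wgt (hn : 0 < n) (p : Fin n → ℝ) (Z : Finset (Finset (Fin n))) :
    mpWeight p Z = wgt (Phat p) (fun m => 1 - Phat p m) Finset.univ Z := by
  unfold mpWeight
  rw [Finset.prod_mul_distrib, wgt, Finset.inter_univ]
  congr 1
  · rw [← prod_pow_card hn p (Z.filter (fun σ => σ ≠ ∅))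
      (fun σ hσ => (Finset.mem_filter.mp hσ).2)]
    apply Finset.prod_congr rfl
    intro i _
    have hs : scount Z (i.1 + 1)
        = ((Z.filter (fun σ => σ ≠ ∅)).filter (fun σ => σ.card = i.1 + 1)).card := by
      unfold scount
      rw [Finset.filter_filter]
      congr 1
      apply Finset.filter_congr
      intro σ _
      constructor
      · intro h
        refine ⟨?_, h⟩
        intro he
        rw [he] at h
        simp at h
      · rintro ⟨_, h⟩; exact h
    rw [hs]
  · have he : ∀ i : Fin n, ecount Z i.1 = ((extS Z).filter (fun σ => σ.card = i.1 + 1)).card := by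
      intro i
      unfold ecount extS
      rw [Finset.filter_filter]
      congr 1
      apply Finset.filter_congr
      intro σ _
      constructor
      · rintro ⟨h1, h2, h3⟩
        refine ⟨⟨?_, h2, h3⟩, h1⟩
        intro he; rw [he] at h1; simp at h1
      · rintro ⟨⟨_, h2, h3⟩, h1⟩
        exact ⟨h1, h2, h3⟩
    have hext : ∀ σ ∈ extS Z, σ ≠ ∅ := fun σ hσ => (Finset.mem_filter.mp hσ).2.1
    calc ∏ i : Fin n, (1 - p i) ^ ecount Z i.1
        = ∏ i : Fin n, (1 - p i) ^ ((extS Z).filter (fun σ => σ.card = i.1 + 1)).card := by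
          apply Finset.prod_congr rfl; intro i _; rw [he i]
      _ = ∏ σ ∈ extS Z, Phat (fun i => 1 - p i) (σ.card - 1) :=
          prod_pow_card hn (fun i => 1 - p i) (extS Z) hext
      _ = ∏ σ ∈ extS Z, (1 - Phat p (σ.card - 1)) := by
          apply Finset.prod_congr rfl
          intro σ hσ
          have h1 : 1 ≤ σ.card := Finset.card_pos.mpr
            (Finset.nonempty_iff_ne_empty.mpr (hext σ hσ))
          have h2 : σ.card ≤ n := by simpa using Finset.card_le_univ σ
          have hlt : σ.card - 1 < n := by omega
          rw [Phat, Phat, dif_pos hlt, dif_pos hlt]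

section Perm

variable (g : Equiv.Perm (Fin n))

lemma img_img (h : Equiv.Perm (Fin n)) (σ : Finset (Fin n)) :
    (σ.image ⇑g).image ⇑h = σ.image (⇑h ∘ ⇑g) := Finset.image_image

lemma img_inv (σ : Finset (Fin n)) : (σ.image ⇑g).image ⇑g⁻¹ = σ := by
  rw [img_img]
  have : ⇑g⁻¹ ∘ ⇑g = id := by
    funext x; simp
  rw [this, Finset.image_id]

lemma img_inv' (σ : Finset (Fin n)) : (σ.image ⇑g⁻¹).image ⇑g = σ := by
  have := img_inv g⁻¹ σ
  rwa [inv_inv] at this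

lemma mem_img_iff (Y : Finset (Finset (Fin n))) (σ : Finset (Fin n)) :
    σ.image ⇑g ∈ Y.image (fun ρ => ρ.image ⇑g) ↔ σ ∈ Y := by
  constructor
  · intro h
    obtain ⟨ρ, hρ, he⟩ := Finset.mem_image.mp h
    rwa [← Finset.image_injective g.injective he]
  · intro h
    exact Finset.mem_image_of_mem _ h

lemma cx_image (Y : Finset (Finset (Fin n))) (hY : SComplex Y) :
    SComplex (Y.image (fun σ => σ.image ⇑g)) := by
  constructor
  · have : (∅ : Finset (Fin n)) = (∅ : Finset (Fin n)).image ⇑g := by simp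
    rw [this]
    exact Finset.mem_image_of_mem _ hY.1
  · intro ρ hρ τ hτ
    obtain ⟨ρ₀, hρ₀, he⟩ := Finset.mem_image.mp hρ
    have hττ : τ = (τ.image ⇑g⁻¹).image ⇑g := (img_inv' g τ).symm
    have hsub : τ.image ⇑g⁻¹ ⊆ ρ₀ := by
      have h1 : τ ⊆ ρ₀.image ⇑g := he ▸ Finset.mem_powerset.mp hτ
      have h2 := Finset.image_subset_image (f := ⇑g⁻¹) h1
      rwa [img_inv] at h2
    have : τ.image ⇑g⁻¹ ∈ Y := hY.2 ρ₀ hρ₀ _ (Finset.mem_powerset.mpr hsub)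
    rw [hττ]
    exact Finset.mem_image_of_mem _ this

lemma scount_image (Y : Finset (Finset (Fin n))) (m : ℕ) :
    scount (Y.image (fun σ => σ.image ⇑g)) m = scount Y m := by
  unfold scount
  symm
  apply Finset.card_bij (fun σ _ => σ.image ⇑g)
  · intro σ hσ
    obtain ⟨h1, h2⟩ := Finset.mem_filter.mp hσ
    refine Finset.mem_filter.mpr ⟨Finset.mem_image_of_mem _ h1, ?_⟩
    rw [Finset.card_image_of_injective _ g.injective, h2]
  · intro σ₁ _ σ₂ _ h
    exact Finset.image_injective g.injective h
  · intro σ' hσ'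
    obtain ⟨h1, h2⟩ := Finset.mem_filter.mp hσ'
    obtain ⟨σ, hσ, he⟩ := Finset.mem_image.mp h1
    refine ⟨σ, Finset.mem_filter.mpr ⟨hσ, ?_⟩, he⟩
    rw [← h2, ← he, Finset.card_image_of_injective _ g.injective]

lemma ecount_image (Y : Finset (Finset (Fin n))) (i : ℕ) :
    ecount (Y.image (fun σ => σ.image ⇑g)) i = ecount Y i := by
  unfold ecount
  symm
  apply Finset.card_bij (fun σ _ => σ.image ⇑g)
  · intro σ hσ
    obtain ⟨-, h1, h2, h3⟩ := Finset.mem_filter.mp hσ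
    refine Finset.mem_filter.mpr ⟨Finset.mem_univ _, ?_, ?_, ?_⟩
    · rw [Finset.card_image_of_injective _ g.injective, h1]
    · rw [mem_img_iff]; exact h2
    · intro τ hτ hτne
      have hττ : τ = (τ.image ⇑g⁻¹).image ⇑g := (img_inv' g τ).symm
      have hsub : τ.image ⇑g⁻¹ ⊆ σ := by
        have h4 := Finset.image_subset_image (f := ⇑g⁻¹) (Finset.mem_powerset.mp hτ)
        rwa [img_inv] at h4
      have hne2 : τ.image ⇑g⁻¹ ≠ σ := by
        intro h
        apply hτne
        rw [hττ, h]
      have : τ.image ⇑g⁻¹ ∈ Y := h3 _ (Finset.mem_powerset.mpr hsub) hne2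
      rw [hττ]
      exact Finset.mem_image_of_mem _ this
  · intro σ₁ _ σ₂ _ h
    exact Finset.image_injective g.injective h
  · intro σ' hσ'
    obtain ⟨-, h1, h2, h3⟩ := Finset.mem_filter.mp hσ'
    refine ⟨σ'.image ⇑g⁻¹, Finset.mem_filter.mpr ⟨Finset.mem_univ _, ?_, ?_, ?_⟩, img_inv' g σ'⟩
    · rw [Finset.card_image_of_injective _ g⁻¹.injective, h1]
    · intro h
      apply h2
      rw [← img_inv' g σ']
      exact Finset.mem_image_of_mem _ h
    · intro τ hτ hτne
      have hsub : τ.image ⇑g ⊆ σ' := by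
        have h4 := Finset.image_subset_image (f := ⇑g) (Finset.mem_powerset.mp hτ)
        rwa [img_inv' g σ'] at h4
      have hne2 : τ.image ⇑g ≠ σ' := by
        intro h
        apply hτne
        rw [← h, img_inv]
      have h5 : τ.image ⇑g ∈ Y.image (fun ρ => ρ.image ⇑g) :=
        h3 _ (Finset.mem_powerset.mpr hsub) hne2
      rwa [mem_img_iff] at h5

lemma img_eq_iff (Y Z : Finset (Finset (Fin n))) :
    Z.image (fun σ => σ.image ⇑g) = Y ↔ Z = Y.image (fun σ => σ.image ⇑g⁻¹) := by
  constructor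
  · rintro rfl
    rw [Finset.image_image]
    have : ((fun σ : Finset (Fin n) => σ.image ⇑g⁻¹) ∘ fun σ => σ.image ⇑g)
        = fun σ : Finset (Fin n) => σ := by
      funext σ; exact img_inv g σ
    rw [this, Finset.image_id']
  · rintro rfl
    rw [Finset.image_image]
    have : ((fun σ : Finset (Fin n) => σ.image ⇑g) ∘ fun σ => σ.image ⇑g⁻¹)
        = fun σ : Finset (Fin n) => σ := by
      funext σ; exact img_inv' g σ
    rw [this, Finset.image_id']

end Perm

lemma prb_partition {Ω : Type*} [MeasurableSpace Ω] (μ : Measure Ω) [IsProbabilityMeasure μ]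
    (X : Ω → Finset (Finset (Fin n)))
    (hmeas : ∀ Y, MeasurableSet {ω | X ω = Y})
    (hXc : ∀ ω, SComplex (X ω)) (Y : Finset (Finset (Fin n))) :
    prb μ {ω | Y ⊆ X ω}
      = ∑ Z ∈ Finset.univ.filter
          (fun Z => SComplex Z ∧ Y ⊆ Z ∧ Z ⊆ (Finset.univ : Finset (Finset (Fin n)))),
          prb μ {ω | X ω = Z} := by
  classical
  set T := Finset.univ.filter
      (fun Z : Finset (Finset (Fin n)) => SComplex Z ∧ Y ⊆ Z ∧ Z ⊆ Finset.univ) with hT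
  have hset : {ω | Y ⊆ X ω} = ⋃ Z ∈ T, {ω | X ω = Z} := by
    ext ω
    simp only [Set.mem_setOf_eq, Set.mem_iUnion, hT, Finset.mem_filter, Finset.mem_univ, true_and]
    constructor
    · intro h
      exact ⟨X ω, ⟨hXc ω, h, Finset.subset_univ _⟩, rfl⟩
    · rintro ⟨Z, ⟨_, hYZ, _⟩, hωZ⟩
      rw [hωZ]
      exact hYZ
  have hdisj : (↑T : Set (Finset (Finset (Fin n)))).PairwiseDisjoint
      (fun Z => {ω | X ω = Z}) := by
    intro Z₁ _ Z₂ _ hne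
    simp only [Function.onFun]
    rw [Set.disjoint_left]
    intro ω hω1 hω2
    exact hne ((hω1 : X ω = Z₁).symm.trans hω2)
  unfold prb
  rw [hset, measure_biUnion_finset hdisj (fun Z _ => hmeas Z)]
  exact ENNReal.toReal_sum (fun Z _ => measure_ne_top μ _)

end Aux

/-- a multi-parameter random simplicial complex is homogeneous and
spatially independent. -/
theorem multiParam_homogeneous_spatiallyIndependent (n : ℕ) (hn : 1 ≤ n)
    {Ω : Type*} [MeasurableSpace Ω] (μ : Measure Ω) [IsProbabilityMeasure μ]
    (X : Ω → Finset (Finset (Fin n)))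
    (hmeas : ∀ Y, MeasurableSet {ω | X ω = Y})
    (hXc : ∀ ω, SComplex (X ω))
    (p : Fin n → ℝ) (hp : ∀ i, p i ∈ Set.Icc (0 : ℝ) 1)
    (hdist : ∀ Y : Finset (Finset (Fin n)), SComplex Y →
      prb μ {ω | X ω = Y} = mpWeight p Y) :
    Homogeneous μ X ∧ SpatInd μ X := by
  classical
  have hwd : ∀ Y, SComplex Y → prb μ {ω | X ω = Y}
      = Aux.wgt (Aux.Phat p) (fun m => 1 - Aux.Phat p m) Finset.univ Y := by
    intro Y hY
    rw [hdist Y hY]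
    exact Aux.mpWeight_eq_wgt hn p Y
  have hsub : ∀ Y, SComplex Y → prb μ {ω | Y ⊆ X ω}
      = ∏ σ ∈ Y.filter (fun σ => σ ≠ ∅), Aux.Phat p (σ.card - 1) := by
    intro Y hY
    rw [Aux.prb_partition μ X hmeas hXc Y]
    rw [Finset.sum_congr rfl (fun Z hZ => hwd Z ((Finset.mem_filter.mp hZ).2.1))]
    exact Aux.key_sum _ _ (fun m => by ring) _ Finset.univ Y (le_refl _)
      Aux.cx_univ hY (Finset.subset_univ Y)
  constructor
  · -- Homogeneous
    intro g Y
    by_cases hY : SComplex Y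
    · have hY' : SComplex (Y.image (fun σ => σ.image ⇑g⁻¹)) := Aux.cx_image g⁻¹ Y hY
      have hset : {ω | Finset.image (fun σ => σ.image ⇑g) (X ω) = Y}
          = {ω | X ω = Y.image (fun σ => σ.image ⇑g⁻¹)} := by
        ext ω
        exact Aux.img_eq_iff g Y (X ω)
      rw [hset, hdist _ hY', hdist _ hY]
      unfold mpWeight
      apply Finset.prod_congr rfl
      intro i _
      rw [Aux.scount_image g⁻¹ Y (i.1 + 1), Aux.ecount_image g⁻¹ Y i.1]
    · have h1 : {ω | X ω = Y} = ∅ := by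
        ext ω
        simp only [Set.mem_setOf_eq, Set.mem_empty_iff_false, iff_false]
        intro h
        exact hY (h ▸ hXc ω)
      have h2 : {ω | Finset.image (fun σ => σ.image ⇑g) (X ω) = Y} = ∅ := by
        ext ω
        simp only [Set.mem_setOf_eq, Set.mem_empty_iff_false, iff_false]
        intro h
        exact hY (h ▸ Aux.cx_image g (X ω) (hXc ω))
      rw [h1, h2]
  · -- SpatInd
    intro Y₁ Y₂ h1 h2
    have hu : SComplex (Y₁ ∪ Y₂) := by
      refine ⟨Finset.mem_union_left _ h1.1, ?_⟩
      intro σ hσ τ hτ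
      rcases Finset.mem_union.mp hσ with h | h
      · exact Finset.mem_union_left _ (h1.2 σ h τ hτ)
      · exact Finset.mem_union_right _ (h2.2 σ h τ hτ)
    have hi : SComplex (Y₁ ∩ Y₂) := by
      refine ⟨Finset.mem_inter.mpr ⟨h1.1, h2.1⟩, ?_⟩
      intro σ hσ τ hτ
      have hm := Finset.mem_inter.mp hσ
      exact Finset.mem_inter.mpr ⟨h1.2 σ hm.1 τ hτ, h2.2 σ hm.2 τ hτ⟩
    rw [hsub _ h1, hsub _ h2, hsub _ hu, hsub _ hi]
    rw [Finset.filter_union, Finset.filter_inter_distrib]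
    exact Finset.prod_union_inter
end

section
/- Fix an integer n ≥ 1 and p = (p₀,…,p_{n−1}) ∈ [0,1]^n, and let X ~ X(n,p) be a multi-parameter random simplicial complex (which is homogeneous and spatially independent), with parameters q_k and r_k. Then: q_{−1} = 1; q_k = ∏_{i=0}^{k} p_i^{C(k+1, i+1)} for 0 ≤ k ≤ n−1 (C(a,b) the binomial coefficient); r_{−1} = p₀; and r_k = ∏_{i=0}^{k+1} p_i^{C(k+1, i)} for 0 ≤ k ≤ n−2. -/
open MeasureTheory Finset Filter


namespace MPAux

open Finset

variable {n : ℕ}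

/-- Extension of `p` to all naturals. -/
noncomputable def pw (p : Fin n → ℝ) (j : ℕ) : ℝ := if h : j < n then p ⟨j, h⟩ else 1

/-- Weight of a single coin flip for the simplex `σ`. -/
noncomputable def w1 (p : Fin n → ℝ) (σ : Finset (Fin n)) (b : Bool) : ℝ :=
  if σ = ∅ then (if b then 1 else 0)
  else (if b then pw p (σ.card - 1) else 1 - pw p (σ.card - 1))

lemma w1_sum (p : Fin n → ℝ) (σ : Finset (Fin n)) : w1 p σ true + w1 p σ false = 1 := by
  unfold w1; split <;> simp

/-- Weight of a full configuration of coin flips. -/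
noncomputable def wfun (p : Fin n → ℝ) (ξ : Finset (Fin n) → Bool) : ℝ :=
  ∏ σ : Finset (Fin n), w1 p σ (ξ σ)

/-- The complex generated by a configuration of coin flips. -/
def phi (ξ : Finset (Fin n) → Bool) : Finset (Finset (Fin n)) :=
  univ.filter (fun σ => ∀ τ ∈ σ.powerset, ξ τ = true)

/-- The external simplices of `Y`. -/
def extF (Y : Finset (Finset (Fin n))) : Finset (Finset (Fin n)) :=
  univ.filter (fun σ => σ ≠ ∅ ∧ σ ∉ Y ∧ ∀ τ ∈ σ.powerset, τ ≠ σ → τ ∈ Y)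

lemma sum_wfun (p : Fin n → ℝ) (T F : Finset (Finset (Fin n))) (hTF : Disjoint T F) :
    ∑ ξ ∈ univ.filter (fun ξ : Finset (Fin n) → Bool =>
        (∀ σ ∈ T, ξ σ = true) ∧ (∀ σ ∈ F, ξ σ = false)), wfun p ξ
    = (∏ σ ∈ T, w1 p σ true) * (∏ σ ∈ F, w1 p σ false) := by
  classical
  set t : Finset (Fin n) → Finset Bool := fun σ =>
    if σ ∈ T then {true} else if σ ∈ F then {false} else Finset.univ with ht
  have hset : univ.filter (fun ξ : Finset (Fin n) → Bool =>
      (∀ σ ∈ T, ξ σ = true) ∧ (∀ σ ∈ F, ξ σ = false)) = Fintype.piFinset t := by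
    ext ξ
    simp only [mem_filter, mem_univ, true_and, Fintype.mem_piFinset, ht]
    constructor
    · rintro ⟨h1, h2⟩ σ
      by_cases hT : σ ∈ T
      · simp [hT, h1 σ hT]
      · by_cases hF : σ ∈ F
        · simp [hT, hF, h2 σ hF]
        · simp [hT, hF]
    · intro h
      refine ⟨fun σ hσ => ?_, fun σ hσ => ?_⟩
      · have := h σ; simp only [if_pos hσ, Finset.mem_singleton] at this; exact this
      · have hT : σ ∉ T := Finset.disjoint_right.mp hTF hσ
        have := h σ; simp only [if_neg hT, if_pos hσ, Finset.mem_singleton] at this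
        exact this
  rw [hset]
  have hsum := Finset.prod_univ_sum t (fun σ (b : Bool) => w1 p σ b)
  simp only [wfun]
  rw [← hsum]
  have hterm : ∀ σ : Finset (Fin n), (∑ b ∈ t σ, w1 p σ b) =
      if σ ∈ T then w1 p σ true else if σ ∈ F then w1 p σ false else 1 := by
    intro σ
    by_cases hT : σ ∈ T
    · simp [ht, hT]
    · by_cases hF : σ ∈ F
      · simp [ht, hT, hF]
      · simp only [ht, if_neg hT, if_neg hF]
        rw [show (Finset.univ : Finset Bool) = {true, false} by rfl]
        rw [Finset.sum_insert (by simp), Finset.sum_singleton, w1_sum]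
  rw [Finset.prod_congr rfl (fun σ _ => hterm σ)]
  rw [← Finset.prod_subset (Finset.subset_univ (T ∪ F))
    (by intro σ _ hσ; simp only [Finset.mem_union, not_or] at hσ
        simp [hσ.1, hσ.2])]
  rw [Finset.prod_union hTF]
  congr 1
  · exact Finset.prod_congr rfl (fun σ hσ => by simp [hσ])
  · refine Finset.prod_congr rfl (fun σ hσ => ?_)
    have hT : σ ∉ T := Finset.disjoint_right.mp hTF hσ
    simp [hT, hσ]

lemma card_le_n (σ : Finset (Fin n)) : σ.card ≤ n := by
  simpa using Finset.card_le_card (Finset.subset_univ σ)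

lemma prod_w1_true (p : Fin n → ℝ) (Z : Finset (Finset (Fin n))) :
    ∏ σ ∈ Z, w1 p σ true = ∏ i : Fin n, p i ^ scount Z (i.1 + 1) := by
  classical
  have hmap : ∀ σ ∈ Z, σ.card ∈ Finset.range (n + 1) := fun σ _ =>
    Finset.mem_range.mpr (Nat.lt_succ_of_le (card_le_n σ))
  rw [← Finset.prod_fiberwise_of_maps_to hmap (fun σ => w1 p σ true)]
  have hg : ∀ m ∈ Finset.range (n + 1),
      (∏ σ ∈ Z.filter (fun σ => σ.card = m), w1 p σ true)
        = if m = 0 then 1 else pw p (m - 1) ^ scount Z m := by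
    intro m hm
    by_cases h0 : m = 0
    · subst h0
      rw [if_pos rfl]
      refine Finset.prod_eq_one (fun σ hσ => ?_)
      have : σ = ∅ := Finset.card_eq_zero.mp (Finset.mem_filter.mp hσ).2
      simp [w1, this]
    · rw [if_neg h0]
      rw [show scount Z m = (Z.filter (fun σ => σ.card = m)).card from rfl]
      rw [← Finset.prod_const]
      refine Finset.prod_congr rfl (fun σ hσ => ?_)
      have hc : σ.card = m := (Finset.mem_filter.mp hσ).2
      have hne : σ ≠ ∅ := by
        intro h; rw [h] at hc; simp at hc; exact h0 hc.symm
      simp [w1, hne, hc]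
  rw [Finset.prod_congr rfl hg, Finset.prod_range_succ']
  norm_num
  rw [← Fin.prod_univ_eq_prod_range (fun j => pw p j ^ scount Z (j + 1)) n]
  exact Finset.prod_congr rfl (fun i _ => by simp [pw, i.2])

lemma prod_w1_false (p : Fin n → ℝ) (Y : Finset (Finset (Fin n))) :
    ∏ σ ∈ extF Y, w1 p σ false = ∏ i : Fin n, (1 - p i) ^ ecount Y i.1 := by
  classical
  have hmap : ∀ σ ∈ extF Y, σ.card ∈ Finset.range (n + 1) := fun σ _ =>
    Finset.mem_range.mpr (Nat.lt_succ_of_le (card_le_n σ))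
  rw [← Finset.prod_fiberwise_of_maps_to hmap (fun σ => w1 p σ false)]
  have hcount : ∀ j : ℕ, ((extF Y).filter (fun σ => σ.card = j + 1)).card = ecount Y j := by
    intro j
    unfold ecount extF
    rw [Finset.filter_filter]
    congr 1
    apply Finset.filter_congr
    intro σ _
    constructor
    · rintro ⟨⟨hne, hY, hP⟩, hc⟩; exact ⟨hc, hY, hP⟩
    · rintro ⟨hc, hY, hP⟩
      exact ⟨⟨by intro h; rw [h] at hc; simp at hc, hY, hP⟩, hc⟩
  have hg : ∀ m ∈ Finset.range (n + 1),
      (∏ σ ∈ (extF Y).filter (fun σ => σ.card = m), w1 p σ false)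
        = if m = 0 then 1 else (1 - pw p (m - 1)) ^ ecount Y (m - 1) := by
    intro m hm
    by_cases h0 : m = 0
    · subst h0
      rw [if_pos rfl]
      refine Finset.prod_eq_one (fun σ hσ => ?_)
      obtain ⟨hσe, hc⟩ := Finset.mem_filter.mp hσ
      exact absurd (Finset.card_eq_zero.mp hc) (Finset.mem_filter.mp hσe).2.1
    · rw [if_neg h0]
      obtain ⟨j, rfl⟩ := Nat.exists_eq_succ_of_ne_zero h0
      rw [show j + 1 - 1 = j from rfl, ← hcount j, ← Finset.prod_const]
      refine Finset.prod_congr rfl (fun σ hσ => ?_)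
      have hc : σ.card = j + 1 := (Finset.mem_filter.mp hσ).2
      have hne : σ ≠ ∅ := by intro h; rw [h] at hc; simp at hc
      simp [w1, hne, hc]
  rw [Finset.prod_congr rfl hg, Finset.prod_range_succ']
  norm_num
  rw [← Fin.prod_univ_eq_prod_range (fun j => (1 - pw p j) ^ ecount Y j) n]
  exact Finset.prod_congr rfl (fun i _ => by simp [pw, i.2])

lemma mem_of_phi {Y : Finset (Finset (Fin n))} (hY : SComplex Y)
    {ξ : Finset (Fin n) → Bool} (h1 : ∀ σ ∈ Y, ξ σ = true)
    (h2 : ∀ σ ∈ extF Y, ξ σ = false) :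
    ∀ m, ∀ σ : Finset (Fin n), σ.card ≤ m → (∀ τ ∈ σ.powerset, ξ τ = true) → σ ∈ Y := by
  intro m
  induction m with
  | zero =>
    intro σ hσ _
    rw [Nat.le_zero, Finset.card_eq_zero] at hσ
    rw [hσ]; exact hY.1
  | succ m ih =>
    intro σ hσ hξ
    by_contra hσY
    have hne : σ ≠ ∅ := by rintro rfl; exact hσY hY.1
    have hext : σ ∈ extF Y := by
      refine Finset.mem_filter.mpr ⟨Finset.mem_univ _, hne, hσY, ?_⟩
      intro τ hτ hτσ
      have hss : τ ⊂ σ := (Finset.mem_powerset.mp hτ).ssubset_of_ne hτσ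
      have hlt : τ.card ≤ m := Nat.lt_succ_iff.mp (lt_of_lt_of_le (Finset.card_lt_card hss) hσ)
      refine ih τ hlt (fun ρ hρ => hξ ρ ?_)
      exact Finset.mem_powerset.mpr ((Finset.mem_powerset.mp hρ).trans hss.subset)
    have hf := h2 σ hext
    have ht := hξ σ (Finset.mem_powerset.mpr (Finset.Subset.refl σ))
    rw [ht] at hf; exact Bool.noConfusion hf

lemma phi_eq_iff {Y : Finset (Finset (Fin n))} (hY : SComplex Y) (ξ : Finset (Fin n) → Bool) :
    phi ξ = Y ↔ ((∀ σ ∈ Y, ξ σ = true) ∧ (∀ σ ∈ extF Y, ξ σ = false)) := by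
  constructor
  · rintro rfl
    refine ⟨fun σ hσ => ?_, fun σ hσ => ?_⟩
    · exact (Finset.mem_filter.mp hσ).2 σ (Finset.mem_powerset.mpr (Finset.Subset.refl σ))
    · obtain ⟨-, hne, hσY, hP⟩ := Finset.mem_filter.mp hσ
      have : ¬ (∀ τ ∈ σ.powerset, ξ τ = true) := by
        intro h; exact hσY (Finset.mem_filter.mpr ⟨Finset.mem_univ _, h⟩)
      push_neg at this
      obtain ⟨τ, hτ, hτf⟩ := this
      by_cases hτσ : τ = σ
      · subst hτσ; exact Bool.not_eq_true _ |>.mp hτf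
      · exact absurd ((Finset.mem_filter.mp (hP τ hτ hτσ)).2 τ
          (Finset.mem_powerset.mpr (Finset.Subset.refl τ))) hτf
  · rintro ⟨h1, h2⟩
    ext σ
    simp only [phi, Finset.mem_filter, Finset.mem_univ, true_and]
    constructor
    · intro h; exact mem_of_phi hY h1 h2 σ.card σ le_rfl h
    · intro hσ τ hτ; exact h1 τ (hY.2 σ hσ τ hτ)

lemma disjoint_extF (Y : Finset (Finset (Fin n))) : Disjoint Y (extF Y) :=
  Finset.disjoint_right.mpr (fun σ hσ => (Finset.mem_filter.mp hσ).2.2.1)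

lemma sum_wfun_fiber (p : Fin n → ℝ) {Y : Finset (Finset (Fin n))} (hY : SComplex Y) :
    ∑ ξ ∈ univ.filter (fun ξ : Finset (Fin n) → Bool => phi ξ = Y), wfun p ξ
      = mpWeight p Y := by
  classical
  have h1 : univ.filter (fun ξ : Finset (Fin n) → Bool => phi ξ = Y)
      = univ.filter (fun ξ : Finset (Fin n) → Bool =>
          (∀ σ ∈ Y, ξ σ = true) ∧ (∀ σ ∈ extF Y, ξ σ = false)) := by
    apply Finset.filter_congr
    intro ξ _
    exact_mod_cast phi_eq_iff hY ξ
  rw [h1, sum_wfun p Y (extF Y) (disjoint_extF Y), prod_w1_true, prod_w1_false,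
    mpWeight, ← Finset.prod_mul_distrib]

lemma subset_phi_iff {Z : Finset (Finset (Fin n))} (hZ : SComplex Z)
    (ξ : Finset (Fin n) → Bool) :
    Z ⊆ phi ξ ↔ ∀ σ ∈ Z, ξ σ = true := by
  constructor
  · intro h σ hσ
    exact (Finset.mem_filter.mp (h hσ)).2 σ (Finset.mem_powerset.mpr (Finset.Subset.refl σ))
  · intro h σ hσ
    refine Finset.mem_filter.mpr ⟨Finset.mem_univ _, fun τ hτ => ?_⟩
    exact h τ (hZ.2 σ hσ τ hτ)

lemma scomplex_phi {Z : Finset (Finset (Fin n))} (hZ : SComplex Z)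
    {ξ : Finset (Fin n) → Bool} (h : Z ⊆ phi ξ) : SComplex (phi ξ) := by
  refine ⟨h hZ.1, ?_⟩
  intro σ hσ τ hτ
  simp only [phi, Finset.mem_filter, Finset.mem_univ, true_and] at hσ ⊢
  intro ρ hρ
  exact hσ ρ (Finset.mem_powerset.mpr
    ((Finset.mem_powerset.mp hρ).trans (Finset.mem_powerset.mp hτ)))

/-- The key combinatorial identity. -/
lemma sum_mpWeight (p : Fin n → ℝ) {Z : Finset (Finset (Fin n))} (hZ : SComplex Z) :
    ∑ Y ∈ univ.filter (fun Y : Finset (Finset (Fin n)) => SComplex Y ∧ Z ⊆ Y), mpWeight p Y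
      = ∏ i : Fin n, p i ^ scount Z (i.1 + 1) := by
  classical
  set s : Finset (Finset (Fin n) → Bool) := univ.filter (fun ξ => Z ⊆ phi ξ) with hs
  set t : Finset (Finset (Finset (Fin n))) :=
    univ.filter (fun Y => SComplex Y ∧ Z ⊆ Y) with htdef
  have hmaps : ∀ ξ ∈ s, phi ξ ∈ t := by
    intro ξ hξ
    have hZφ : Z ⊆ phi ξ := (Finset.mem_filter.mp hξ).2
    exact Finset.mem_filter.mpr ⟨Finset.mem_univ _, scomplex_phi hZ hZφ, hZφ⟩
  have key := Finset.sum_fiberwise_of_maps_to hmaps (wfun p)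
  have hfib : ∀ Y ∈ t, (s.filter (fun ξ => phi ξ = Y))
      = univ.filter (fun ξ : Finset (Fin n) → Bool => phi ξ = Y) := by
    intro Y hY
    obtain ⟨-, hYc, hZY⟩ := Finset.mem_filter.mp hY
    rw [hs, Finset.filter_filter]
    apply Finset.filter_congr
    intro ξ _
    constructor
    · rintro ⟨-, h⟩; exact h
    · intro h; exact ⟨h ▸ hZY, h⟩
  have step1 : ∑ Y ∈ t, mpWeight p Y = ∑ ξ ∈ s, wfun p ξ := by
    rw [← key]
    refine Finset.sum_congr rfl (fun Y hY => ?_)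
    rw [hfib Y hY, sum_wfun_fiber p (Finset.mem_filter.mp hY).2.1]
  rw [step1]
  have hs2 : s = univ.filter (fun ξ : Finset (Fin n) → Bool =>
      (∀ σ ∈ Z, ξ σ = true) ∧ (∀ σ ∈ (∅ : Finset (Finset (Fin n))), ξ σ = false)) := by
    rw [hs]
    apply Finset.filter_congr
    intro ξ _
    simp only [Finset.notMem_empty, false_implies, implies_true, and_true]
    exact_mod_cast subset_phi_iff hZ ξ
  rw [hs2, sum_wfun p Z ∅ (Finset.disjoint_empty_right Z), Finset.prod_empty, mul_one,
    prod_w1_true]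

end MPAux


namespace MPAux

open MeasureTheory

variable {n : ℕ} {Ω : Type*} [MeasurableSpace Ω]

lemma prb_mem_eq (μ : Measure Ω) [IsProbabilityMeasure μ]
    (X : Ω → Finset (Finset (Fin n)))
    (hmeas : ∀ Y, MeasurableSet {ω | X ω = Y}) (hXc : ∀ ω, SComplex (X ω))
    (τ : Finset (Fin n)) :
    prb μ {ω | τ ∈ X ω}
      = ∑ Y ∈ univ.filter (fun Y : Finset (Finset (Fin n)) => SComplex Y ∧ τ ∈ Y),
          prb μ {ω | X ω = Y} := by
  classical
  set t := univ.filter (fun Y : Finset (Finset (Fin n)) => SComplex Y ∧ τ ∈ Y) with ht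
  have hU : {ω | τ ∈ X ω} = ⋃ Y ∈ t, {ω | X ω = Y} := by
    ext ω
    simp only [Set.mem_setOf_eq, Set.mem_iUnion, ht, Finset.mem_filter, Finset.mem_univ,
      true_and]
    constructor
    · intro h; exact ⟨X ω, ⟨hXc ω, h⟩, rfl⟩
    · rintro ⟨Y, ⟨-, hτ⟩, hXY⟩
      have : X ω = Y := hXY
      rw [this]; exact hτ
  have hd : (↑t : Set (Finset (Finset (Fin n)))).PairwiseDisjoint
      (fun Y => {ω | X ω = Y}) := by
    intro Y _ Y' _ hne
    refine Set.disjoint_left.mpr (fun ω h1 h2 => ?_)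
    exact hne ((h1 : X ω = Y).symm.trans (h2 : X ω = Y'))
  rw [prb, hU, measure_biUnion_finset hd (fun Y _ => hmeas Y)]
  exact ENNReal.toReal_sum (fun Y _ => measure_ne_top μ _)

lemma prb_mem_prod (μ : Measure Ω) [IsProbabilityMeasure μ]
    (X : Ω → Finset (Finset (Fin n)))
    (hmeas : ∀ Y, MeasurableSet {ω | X ω = Y}) (hXc : ∀ ω, SComplex (X ω))
    (p : Fin n → ℝ)
    (hdist : ∀ Y : Finset (Finset (Fin n)), SComplex Y →
      prb μ {ω | X ω = Y} = mpWeight p Y)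
    (τ : Finset (Fin n)) :
    prb μ {ω | τ ∈ X ω} = ∏ i : Fin n, p i ^ Nat.choose τ.card (i.1 + 1) := by
  classical
  rw [prb_mem_eq μ X hmeas hXc τ]
  rw [Finset.sum_congr rfl (fun Y hY => hdist Y (Finset.mem_filter.mp hY).2.1)]
  have hfil : univ.filter (fun Y : Finset (Finset (Fin n)) => SComplex Y ∧ τ ∈ Y)
      = univ.filter (fun Y : Finset (Finset (Fin n)) => SComplex Y ∧ τ.powerset ⊆ Y) := by
    apply Finset.filter_congr
    intro Y _
    constructor
    · rintro ⟨hY, hτ⟩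
      exact ⟨hY, fun σ hσ => hY.2 τ hτ σ hσ⟩
    · rintro ⟨hY, hs⟩
      exact ⟨hY, hs (Finset.mem_powerset_self τ)⟩
  have hpc : SComplex (τ.powerset) := by
    refine ⟨Finset.mem_powerset.mpr (Finset.empty_subset τ), ?_⟩
    intro σ hσ ρ hρ
    exact Finset.mem_powerset.mpr
      ((Finset.mem_powerset.mp hρ).trans (Finset.mem_powerset.mp hσ))
  rw [hfil, sum_mpWeight p hpc]
  refine Finset.prod_congr rfl (fun i _ => ?_)
  congr 1
  rw [scount, ← Finset.powersetCard_eq_filter, Finset.card_powersetCard]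

lemma card_stdSimp {n k : ℕ} (h : k + 1 ≤ n) : (stdSimp n (k : ℤ)).card = k + 1 := by
  have heq : stdSimp n (k : ℤ) = Finset.attachFin (Finset.range (k + 1))
      (fun m hm => lt_of_lt_of_le (Finset.mem_range.mp hm) h) := by
    ext v
    simp only [stdSimp, Finset.mem_filter, Finset.mem_univ, true_and, Finset.mem_attachFin,
      Finset.mem_range]
    omega
  rw [heq, Finset.card_attachFin, Finset.card_range]

lemma stdSimp_subset {k k' : ℤ} (h : k ≤ k') : stdSimp n k ⊆ stdSimp n k' := by
  intro v hv
  simp only [stdSimp, Finset.mem_filter, Finset.mem_univ, true_and] at hv ⊢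
  omega

lemma stdSimp_neg_one : stdSimp n (-1) = (∅ : Finset (Fin n)) := by
  ext v
  simp only [stdSimp, Finset.mem_filter, Finset.mem_univ, true_and, Finset.notMem_empty,
    iff_false]
  omega

end MPAux

/-- the parameters `q_k` and `r_k` of a multi-parameter random simplicial
complex. (Note `Nat.choose (k+1) (i+1) = 0` for `i > k`, resp. `Nat.choose (k+1) i = 0`
for `i > k+1`, so the products below agree with `∏_{i=0}^{k} p_i^{C(k+1,i+1)}`, resp.
`∏_{i=0}^{k+1} p_i^{C(k+1,i)}`.) -/
theorem multiParam_qpar_rpar (n : ℕ) (hn : 1 ≤ n)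
    {Ω : Type*} [MeasurableSpace Ω] (μ : Measure Ω) [IsProbabilityMeasure μ]
    (X : Ω → Finset (Finset (Fin n)))
    (hmeas : ∀ Y, MeasurableSet {ω | X ω = Y})
    (hXc : ∀ ω, SComplex (X ω))
    (p : Fin n → ℝ) (hp : ∀ i, p i ∈ Set.Icc (0 : ℝ) 1)
    (hdist : ∀ Y : Finset (Finset (Fin n)), SComplex Y →
      prb μ {ω | X ω = Y} = mpWeight p Y) :
    qpar μ X (-1) = 1 ∧
    (∀ k : ℕ, k + 1 ≤ n →
      qpar μ X (k : ℤ) = ∏ i : Fin n, p i ^ Nat.choose (k + 1) (i.1 + 1)) ∧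
    rpar μ X (-1) = p ⟨0, hn⟩ ∧
    (∀ k : ℕ, k + 2 ≤ n →
      rpar μ X (k : ℤ) = ∏ i : Fin n, p i ^ Nat.choose (k + 1) i.1) := by
  classical
  have hknn : ∀ k : ℕ, ¬ ((k : ℤ) < 0) := fun k => by omega
  have hq1 : qpar μ X (-1) = 1 := by simp [qpar]
  have hq : ∀ k : ℕ, k + 1 ≤ n →
      qpar μ X (k : ℤ) = ∏ i : Fin n, p i ^ Nat.choose (k + 1) (i.1 + 1) := by
    intro k hk
    rw [qpar, if_neg (hknn k),
      MPAux.prb_mem_prod μ X hmeas hXc p hdist (stdSimp n (k : ℤ)),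
      MPAux.card_stdSimp hk]
  refine ⟨hq1, hq, ?_, ?_⟩
  · -- r_{-1} = p 0
    rw [rpar, if_pos (by rw [hq1]; norm_num)]
    have hB : {ω | stdSimp n (-1) ∈ X ω} = Set.univ := by
      ext ω
      simp only [Set.mem_setOf_eq, Set.mem_univ, iff_true, MPAux.stdSimp_neg_one]
      exact (hXc ω).1
    rw [condP, hB, Set.inter_univ]
    have huniv : prb μ (Set.univ : Set Ω) = 1 := by simp [prb]
    rw [huniv, div_one]
    have h01 : (-1 : ℤ) + 1 = ((0 : ℕ) : ℤ) := by norm_num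
    rw [h01, MPAux.prb_mem_prod μ X hmeas hXc p hdist,
      MPAux.card_stdSimp (show 0 + 1 ≤ n from hn)]
    rw [Finset.prod_eq_single (⟨0, hn⟩ : Fin n) ?_ (fun h => absurd (Finset.mem_univ _) h)]
    · norm_num
    · intro i _ hne
      have h1i : 1 < i.1 + 1 := by
        rcases Nat.eq_zero_or_pos i.1 with h | h
        · exact absurd (Fin.ext h) hne
        · omega
      rw [Nat.choose_eq_zero_of_lt (by omega : 0 + 1 < i.1 + 1), pow_zero]
  · -- r_k
    intro k hk
    have hk1 : k + 1 ≤ n := by omega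
    have hk2 : (k + 1) + 1 ≤ n := by omega
    have hqk := hq k hk1
    have hqk1 := hq (k + 1) hk2
    have hcast : (k : ℤ) + 1 = ((k + 1 : ℕ) : ℤ) := by push_cast; ring
    have hpascal : (∏ i : Fin n, p i ^ Nat.choose (k + 1 + 1) (i.1 + 1))
        = (∏ i : Fin n, p i ^ Nat.choose (k + 1) (i.1 + 1))
          * ∏ i : Fin n, p i ^ Nat.choose (k + 1) i.1 := by
      rw [← Finset.prod_mul_distrib]
      refine Finset.prod_congr rfl (fun i _ => ?_)
      rw [← pow_add]
      congr 1
      rw [Nat.choose_succ_succ (k + 1) i.1]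
      exact Nat.add_comm _ _
    have hBq : qpar μ X (k : ℤ) = prb μ {ω | stdSimp n (k : ℤ) ∈ X ω} := by
      rw [qpar, if_neg (hknn k)]
    by_cases hpos : 0 < qpar μ X (k : ℤ)
    · rw [rpar, if_pos hpos]
      have hsub : stdSimp n (k : ℤ) ⊆ stdSimp n ((k : ℤ) + 1) :=
        MPAux.stdSimp_subset (by omega)
      have hAB : {ω | stdSimp n ((k : ℤ) + 1) ∈ X ω} ∩ {ω | stdSimp n (k : ℤ) ∈ X ω}
          = {ω | stdSimp n ((k : ℤ) + 1) ∈ X ω} := by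
        apply Set.inter_eq_left.mpr
        intro ω hω
        exact (hXc ω).2 _ hω _ (Finset.mem_powerset.mpr hsub)
      have hA : prb μ {ω | stdSimp n ((k : ℤ) + 1) ∈ X ω}
          = ∏ i : Fin n, p i ^ Nat.choose (k + 1 + 1) (i.1 + 1) := by
        rw [hcast, MPAux.prb_mem_prod μ X hmeas hXc p hdist,
          MPAux.card_stdSimp hk2]
      rw [condP, hAB, hA, ← hBq, hqk, hpascal]
      exact mul_div_cancel_left₀ _ (ne_of_gt (hqk ▸ hpos))
    · rw [rpar, if_neg hpos]
      have hq0 : qpar μ X (k : ℤ) = 0 := by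
        refine le_antisymm (not_lt.mp hpos) ?_
        rw [hBq]; exact ENNReal.toReal_nonneg
      rw [hqk] at hq0
      obtain ⟨i, -, hi⟩ := Finset.prod_eq_zero_iff.mp hq0
      obtain ⟨hp0, hc0⟩ := pow_eq_zero_iff'.mp hi
      have hik : i.1 ≤ k := by
        by_contra hgt
        exact hc0 (Nat.choose_eq_zero_of_lt (by omega))
      symm
      refine Finset.prod_eq_zero (Finset.mem_univ i) ?_
      rw [hp0]
      exact zero_pow (Nat.choose_pos (by omega : i.1 ≤ k + 1)).ne'
end

section
/- For a random subcomplex X of Δₙ, the following are equivalent: (1) X is spatially independent, i.e. P(Y₁ ∪ Y₂ ⊆ X)·P(Y₁ ∩ Y₂ ⊆ X) = P(Y₁ ⊆ X)·P(Y₂ ⊆ X) for all Y₁, Y₂ ∈ Sₙ; (2) for all Y₁, Y₂ ∈ Sₙ with P(Y₂ ⊆ X) > 0, P(Y₁ ⊆ X | Y₂ ⊆ X) = P(Y₁ ⊆ X | Y₁ ∩ Y₂ ⊆ X); (3) for all Y₁, Y₂ ∈ Sₙ with P(Y₁ ∩ Y₂ ⊆ X) > 0, P(Y₁ ∪ Y₂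 ⊆ X | Y₁ ∩ Y₂ ⊆ X) = P(Y₁ ⊆ X | Y₁ ∩ Y₂ ⊆ X)·P(Y₂ ⊆ X | Y₁ ∩ Y₂ ⊆ X); (4) for all Y₁, Y₂, Z ∈ Sₙ with Y₁ ∩ Y₂ ⊆ Z and P(Z ⊆ X) > 0, P(Y₁ ∪ Y₂ ⊆ X | Z ⊆ X) = P(Y₁ ⊆ X | Z ⊆ X)·P(Y₂ ⊆ X | Z ⊆ X). -/
open MeasureTheory Finset Filter


/-!
Write `P(Y)` for `P(Y ⊆ X)`. Since `{Y ⊆ X} ∩ {Z ⊆ X} = {Y ∪ Z ⊆ X}`, every conditional probability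
in the statement is a quotient `P(Y ∪ Z) / P(Z)`, and conditions (2) and (3) are the identity
`P(Y₁ ∪ Y₂) P(Y₁ ∩ Y₂) = P(Y₁) P(Y₂)` divided by a positive number; when that number vanishes,
`P` being antitone makes both sides of the identity zero. Condition (4) follows by applying (1)
to `Y₁ ∪ Z` and `Y₂ ∪ Z`, whose intersection is `Z`.
-/

lemma div_eq_div_mul_div_iff {u a b v : ℝ} (hv : v ≠ 0) :
    u / v = a / v * (b / v) ↔ u * v = a * b := by
  rw [div_mul_div_comm, div_eq_div_iff hv (mul_ne_zero hv hv)]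
  constructor
  · intro h
    exact mul_right_cancel₀ hv (by linear_combination h)
  · intro h
    linear_combination v * h

lemma mul_eq_mul_iff_div_eq_div {u a b v : ℝ} (hu : 0 ≤ u) (hub : u ≤ b) (hbv : b ≤ v) :
    u * v = a * b ↔ (0 < b → u / b = a / v) := by
  rcases hu.trans hub |>.eq_or_lt with hb | hb
  · have hu0 : u = 0 := le_antisymm (hub.trans hb.ge) hu
    simp [← hb, hu0]
  · rw [div_eq_div_iff hb.ne' (hb.trans_le hbv).ne']
    exact ⟨fun h _ => h, fun h => h hb⟩

lemma mul_eq_mul_iff_div_eq_div_mul_div {u a b v : ℝ} (ha : 0 ≤ a) (hav : a ≤ v) :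
    u * v = a * b ↔ (0 < v → u / v = a / v * (b / v)) := by
  rcases ha.trans hav |>.eq_or_lt with hv | hv
  · have ha0 : a = 0 := le_antisymm (hav.trans hv.ge) ha
    simp [← hv, ha0]
  · rw [div_eq_div_mul_div_iff hv.ne']
    exact ⟨fun h _ => h, fun h => h hv⟩

namespace SComplex

variable {V : Type*} [DecidableEq V] {Y₁ Y₂ : Finset (Finset V)}

lemma union (h₁ : SComplex Y₁) (h₂ : SComplex Y₂) : SComplex (Y₁ ∪ Y₂) := by
  refine ⟨mem_union_left _ h₁.1, fun σ hσ τ hτ => ?_⟩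
  rcases mem_union.1 hσ with h | h
  · exact mem_union_left _ (h₁.2 σ h τ hτ)
  · exact mem_union_right _ (h₂.2 σ h τ hτ)

lemma inter (h₁ : SComplex Y₁) (h₂ : SComplex Y₂) : SComplex (Y₁ ∩ Y₂) := by
  refine ⟨mem_inter.2 ⟨h₁.1, h₂.1⟩, fun σ hσ τ hτ => ?_⟩
  obtain ⟨hσ₁, hσ₂⟩ := mem_inter.1 hσ
  exact mem_inter.2 ⟨h₁.2 σ hσ₁ τ hτ, h₂.2 σ hσ₂ τ hτ⟩

end SComplex

lemma setOf_union_subset {α Ω : Type*} [DecidableEq α] (X : Ω → Finset α) (Y Z : Finset α) :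
    {ω | Y ∪ Z ⊆ X ω} = {ω | Y ⊆ X ω} ∩ {ω | Z ⊆ X ω} := by
  ext ω
  simp [union_subset_iff]

section Containment

variable {α Ω : Type*} [MeasurableSpace Ω] (μ : Measure Ω) (X : Ω → Finset α)

lemma prb_nonneg (A : Set Ω) : 0 ≤ prb μ A := ENNReal.toReal_nonneg

lemma prb_setOf_subset_anti [IsFiniteMeasure μ] {Y Y' : Finset α} (h : Y ⊆ Y') :
    prb μ {ω | Y' ⊆ X ω} ≤ prb μ {ω | Y ⊆ X ω} :=
  ENNReal.toReal_mono (measure_ne_top μ _) (measure_mono fun _ hω => h.trans hω)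

variable [DecidableEq α]

lemma condP_setOf_subset (Y Z : Finset α) :
    condP μ {ω | Y ⊆ X ω} {ω | Z ⊆ X ω} = prb μ {ω | Y ∪ Z ⊆ X ω} / prb μ {ω | Z ⊆ X ω} := by
  rw [condP, setOf_union_subset]

lemma condP_setOf_subset_of_subset {Y Z : Finset α} (h : Z ⊆ Y) :
    condP μ {ω | Y ⊆ X ω} {ω | Z ⊆ X ω} = prb μ {ω | Y ⊆ X ω} / prb μ {ω | Z ⊆ X ω} := by
  rw [condP_setOf_subset, union_eq_left.2 h]

end Containment

theorem spatiallyIndependent_tfae_general (n : ℕ)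
    {Ω : Type*} [MeasurableSpace Ω] (μ : Measure Ω) [IsProbabilityMeasure μ]
    (X : Ω → Finset (Finset (Fin n))) :
    List.TFAE [
      SpatInd μ X,
      ∀ Y₁ Y₂ : Finset (Finset (Fin n)), SComplex Y₁ → SComplex Y₂ →
        0 < prb μ {ω | Y₂ ⊆ X ω} →
        condP μ {ω | Y₁ ⊆ X ω} {ω | Y₂ ⊆ X ω} =
          condP μ {ω | Y₁ ⊆ X ω} {ω | Y₁ ∩ Y₂ ⊆ X ω},
      ∀ Y₁ Y₂ : Finset (Finset (Fin n)), SComplex Y₁ → SComplex Y₂ →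
        0 < prb μ {ω | Y₁ ∩ Y₂ ⊆ X ω} →
        condP μ {ω | Y₁ ∪ Y₂ ⊆ X ω} {ω | Y₁ ∩ Y₂ ⊆ X ω} =
          condP μ {ω | Y₁ ⊆ X ω} {ω | Y₁ ∩ Y₂ ⊆ X ω} *
            condP μ {ω | Y₂ ⊆ X ω} {ω | Y₁ ∩ Y₂ ⊆ X ω},
      ∀ Y₁ Y₂ Z : Finset (Finset (Fin n)), SComplex Y₁ → SComplex Y₂ → SComplex Z →
        Y₁ ∩ Y₂ ⊆ Z → 0 < prb μ {ω | Z ⊆ X ω} →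
        condP μ {ω | Y₁ ∪ Y₂ ⊆ X ω} {ω | Z ⊆ X ω} =
          condP μ {ω | Y₁ ⊆ X ω} {ω | Z ⊆ X ω} *
            condP μ {ω | Y₂ ⊆ X ω} {ω | Z ⊆ X ω}] := by
  have hanti {Y Y' : Finset (Finset (Fin n))} (h : Y ⊆ Y') := prb_setOf_subset_anti μ X h
  tfae_have 1 ↔ 2 := forall₄_congr fun Y₁ Y₂ _ _ => by
    rw [condP_setOf_subset, condP_setOf_subset_of_subset μ X inter_subset_left]
    exact mul_eq_mul_iff_div_eq_div (prb_nonneg μ _) (hanti subset_union_right)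
      (hanti inter_subset_right)
  tfae_have 1 ↔ 3 := forall₄_congr fun Y₁ Y₂ _ _ => by
    rw [condP_setOf_subset_of_subset μ X (inter_subset_left.trans subset_union_left),
      condP_setOf_subset_of_subset μ X inter_subset_left,
      condP_setOf_subset_of_subset μ X inter_subset_right]
    exact mul_eq_mul_iff_div_eq_div_mul_div (prb_nonneg μ _) (hanti inter_subset_left)
  tfae_have 1 → 4 := fun h Y₁ Y₂ Z h₁ h₂ hZ hsub hZpos => by
    have hunion := h (Y₁ ∪ Z) (Y₂ ∪ Z) (h₁.union hZ) (h₂.union hZ)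
    rw [← union_union_distrib_right, ← inter_union_distrib_right, union_eq_right.2 hsub]
      at hunion
    simp only [condP_setOf_subset]
    exact (div_eq_div_mul_div_iff hZpos.ne').2 hunion
  tfae_have 4 → 3 := fun h Y₁ Y₂ h₁ h₂ => h Y₁ Y₂ _ h₁ h₂ (h₁.inter h₂) subset_rfl
  tfae_finish

/-- four characterizations of spatial independence. -/
theorem spatiallyIndependent_tfae (n : ℕ)
    {Ω : Type*} [MeasurableSpace Ω] (μ : Measure Ω) [IsProbabilityMeasure μ]
    (X : Ω → Finset (Finset (Fin n)))
    (hmeas : ∀ Y, MeasurableSet {ω | X ω = Y})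
    (hXc : ∀ ω, SComplex (X ω)) :
    List.TFAE [
      SpatInd μ X,
      ∀ Y₁ Y₂ : Finset (Finset (Fin n)), SComplex Y₁ → SComplex Y₂ →
        0 < prb μ {ω | Y₂ ⊆ X ω} →
        condP μ {ω | Y₁ ⊆ X ω} {ω | Y₂ ⊆ X ω} =
          condP μ {ω | Y₁ ⊆ X ω} {ω | Y₁ ∩ Y₂ ⊆ X ω},
      ∀ Y₁ Y₂ : Finset (Finset (Fin n)), SComplex Y₁ → SComplex Y₂ →
        0 < prb μ {ω | Y₁ ∩ Y₂ ⊆ X ω} →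
        condP μ {ω | Y₁ ∪ Y₂ ⊆ X ω} {ω | Y₁ ∩ Y₂ ⊆ X ω} =
          condP μ {ω | Y₁ ⊆ X ω} {ω | Y₁ ∩ Y₂ ⊆ X ω} *
            condP μ {ω | Y₂ ⊆ X ω} {ω | Y₁ ∩ Y₂ ⊆ X ω},
      ∀ Y₁ Y₂ Z : Finset (Finset (Fin n)), SComplex Y₁ → SComplex Y₂ → SComplex Z →
        Y₁ ∩ Y₂ ⊆ Z → 0 < prb μ {ω | Z ⊆ X ω} →
        condP μ {ω | Y₁ ∪ Y₂ ⊆ X ω} {ω | Z ⊆ X ω} =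
          condP μ {ω | Y₁ ⊆ X ω} {ω | Z ⊆ X ω} *
            condP μ {ω | Y₂ ⊆ X ω} {ω | Z ⊆ X ω}] :=
  spatiallyIndependent_tfae_general n μ X
end

section
/- Let X be a spatially independent random subcomplex of Δₙ. Then for every Y ∈ Sₙ and every Z₁, Z₂ ∈ Sₙ with Z₁ ⊆ Z₂ and P(Z₂ ⊆ X) > 0 (so also P(Z₁ ⊆ X) > 0), one has P(Y ⊆ X | Z₁ ⊆ X) ≤ P(Y ⊆ X | Z₂ ⊆ X). -/
open MeasureTheory Finset Filter


lemma SComplex.union' {V : Type*} [DecidableEq V] {A B : Finset (Finset V)}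
    (hA : SComplex A) (hB : SComplex B) : SComplex (A ∪ B) := by
  refine ⟨Finset.mem_union_left _ hA.1, fun σ hσ τ hτ => ?_⟩
  rcases Finset.mem_union.1 hσ with h | h
  · exact Finset.mem_union_left _ (hA.2 σ h τ hτ)
  · exact Finset.mem_union_right _ (hB.2 σ h τ hτ)

lemma SComplex.inter' {V : Type*} [DecidableEq V] {A B : Finset (Finset V)}
    (hA : SComplex A) (hB : SComplex B) : SComplex (A ∩ B) := by
  refine ⟨Finset.mem_inter.2 ⟨hA.1, hB.1⟩, fun σ hσ τ hτ => ?_⟩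
  rcases Finset.mem_inter.1 hσ with ⟨h1, h2⟩
  exact Finset.mem_inter.2 ⟨hA.2 σ h1 τ hτ, hB.2 σ h2 τ hτ⟩

/-- monotonicity of conditional containment probabilities for a
spatially independent random subcomplex. -/
theorem spatiallyIndependent_condP_mono (n : ℕ)
    {Ω : Type*} [MeasurableSpace Ω] (μ : Measure Ω) [IsProbabilityMeasure μ]
    (X : Ω → Finset (Finset (Fin n)))
    (hmeas : ∀ Y, MeasurableSet {ω | X ω = Y})
    (hXc : ∀ ω, SComplex (X ω))
    (hsi : SpatInd μ X)
    (Y Z₁ Z₂ : Finset (Finset (Fin n)))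
    (hY : SComplex Y) (hZ₁ : SComplex Z₁) (hZ₂ : SComplex Z₂)
    (hsub : Z₁ ⊆ Z₂) (hpos : 0 < prb μ {ω | Z₂ ⊆ X ω}) :
    0 < prb μ {ω | Z₁ ⊆ X ω} ∧
      condP μ {ω | Y ⊆ X ω} {ω | Z₁ ⊆ X ω} ≤ condP μ {ω | Y ⊆ X ω} {ω | Z₂ ⊆ X ω} := by
  refine ⟨?_, ?_⟩
  case _ => exact hpos.trans_le (ENNReal.toReal_mono (measure_ne_top μ _)
      (measure_mono fun ω hω => Finset.Subset.trans hsub hω))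
  case _ =>
    have hmono : ∀ A B : Finset (Finset (Fin n)), A ⊆ B →
        prb μ {ω | B ⊆ X ω} ≤ prb μ {ω | A ⊆ X ω} := fun A B h =>
      ENNReal.toReal_mono (measure_ne_top μ _)
        (measure_mono fun ω hω => Finset.Subset.trans h hω)
    have h1pos : 0 < prb μ {ω | Z₁ ⊆ X ω} := hpos.trans_le (hmono _ _ hsub)
    have hkey := hsi (Y ∪ Z₁) Z₂ (hY.union' hZ₁) hZ₂
    have he1 : (Y ∪ Z₁) ∪ Z₂ = Y ∪ Z₂ := by
      rw [Finset.union_assoc, Finset.union_eq_right.2 hsub]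
    rw [he1] at hkey
    have hZ1sub : Z₁ ⊆ (Y ∪ Z₁) ∩ Z₂ :=
      Finset.subset_inter (Finset.subset_union_right) hsub
    have hnn : 0 ≤ prb μ {ω | Y ∪ Z₂ ⊆ X ω} := ENNReal.toReal_nonneg
    have hineq : prb μ {ω | Y ∪ Z₁ ⊆ X ω} * prb μ {ω | Z₂ ⊆ X ω} ≤
        prb μ {ω | Y ∪ Z₂ ⊆ X ω} * prb μ {ω | Z₁ ⊆ X ω} := by
      rw [← hkey]
      exact mul_le_mul_of_nonneg_left (hmono _ _ hZ1sub) hnn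
    have hset : ∀ (A B : Finset (Finset (Fin n))),
        {ω | A ⊆ X ω} ∩ {ω | B ⊆ X ω} = {ω | A ∪ B ⊆ X ω} := by
      intro A B
      ext ω
      simp [Finset.union_subset_iff, Set.mem_inter_iff]
    unfold condP
    rw [hset, hset, div_le_div_iff₀ h1pos hpos]
    exact hineq
end

section
/- Let (S, d) be a separable metric space whose metric d is an ultrametric, i.e. d(x,z) ≤ max(d(x,y), d(y,z)) for all x, y, z ∈ S. Let (μₙ)_{n=1}^∞ and μ be Borel probability measures on S. Then μₙ converges weakly to μ (meaning ∫ g dμₙ → ∫ g dμ for every bounded continuous real function g on S) if and only if μₙ(B(x,r)) → μ(B(x,r)) for every x ∈ S and r > 0, where B(x,r) denotes the open ball of radius r centered at x. -/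
open MeasureTheory Finset Filter

section Aux

variable {S : Type*} [MetricSpace S] [IsUltrametricDist S]
    [MeasurableSpace S] [BorelSpace S]

/-- "ball or empty" predicate -/
private def IsBE (B : Set S) : Prop := B = ∅ ∨ ∃ x r, B = Metric.ball x r

private lemma IsBE.measurableSet {B : Set S} (h : IsBE B) : MeasurableSet B := by
  rcases h with rfl | ⟨x, r, rfl⟩
  · exact MeasurableSet.empty
  · exact Metric.isOpen_ball.measurableSet

private lemma IsBE.inter {A B : Set S} (hA : IsBE A) (hB : IsBE B) : IsBE (A ∩ B) := by
  rcases hA with rfl | ⟨x, r, rfl⟩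
  · left; simp
  rcases hB with rfl | ⟨y, s, rfl⟩
  · left; simp
  rcases IsUltrametricDist.ball_subset_trichotomy x y r s with h | h | h
  · right; exact ⟨x, r, by rw [Set.inter_eq_left.mpr h]⟩
  · right; exact ⟨y, s, by rw [Set.inter_eq_right.mpr h]⟩
  · left; exact Set.disjoint_iff_inter_eq_empty.mp h

private lemma tendsto_of_isBE {μs : ℕ → Measure S} {μ : Measure S}
    (h : ∀ (x : S) (r : ℝ), 0 < r →
        Tendsto (fun n => μs n (Metric.ball x r)) atTop (nhds (μ (Metric.ball x r))))
    {B : Set S} (hB : IsBE B) :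
    Tendsto (fun n => μs n B) atTop (nhds (μ B)) := by
  rcases hB with rfl | ⟨x, r, rfl⟩
  · simpa using tendsto_const_nhds
  rcases lt_or_ge 0 r with hr | hr
  · exact h x r hr
  · rw [Metric.ball_eq_empty.mpr hr]
    simpa using tendsto_const_nhds

private lemma tendsto_biUnion_of_isBE {μs : ℕ → Measure S} {μ : Measure S}
    (hμs : ∀ n, IsProbabilityMeasure (μs n)) (hμ : IsProbabilityMeasure μ)
    (h : ∀ (x : S) (r : ℝ), 0 < r →
        Tendsto (fun n => μs n (Metric.ball x r)) atTop (nhds (μ (Metric.ball x r))))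
    (k : ℕ) (f : ℕ → Set S) (hf : ∀ i, IsBE (f i)) :
    Tendsto (fun n => μs n (⋃ i ∈ Finset.range k, f i)) atTop
      (nhds (μ (⋃ i ∈ Finset.range k, f i))) := by
  induction k generalizing f with
  | zero => simpa using tendsto_const_nhds
  | succ k ih =>
    have hU : ∀ ν : Measure S, ν (⋃ i ∈ Finset.range (k+1), f i)
        = ν (f k ∪ ⋃ i ∈ Finset.range k, f i) := by
      intro ν
      congr 1
      rw [Finset.range_add_one]
      simp [Set.biUnion_insert]
    set U := ⋃ i ∈ Finset.range k, f i with hUdef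
    have hUmeas : MeasurableSet U :=
      MeasurableSet.biUnion (Finset.range k).countable_toSet (fun i _ => (hf i).measurableSet)
    have hkmeas : MeasurableSet (f k) := (hf k).measurableSet
    -- the intersection family
    have hinter : f k ∩ U = ⋃ i ∈ Finset.range k, (f k ∩ f i) := by
      rw [hUdef, Set.inter_iUnion₂]
    have hginter : ∀ i, IsBE (f k ∩ f i) := fun i => (hf k).inter (hf i)
    -- union formula for probability measures
    have key : ∀ (ν : Measure S), IsProbabilityMeasure ν →
        ν (f k ∪ U) = ν (f k) + ν U - ν (⋃ i ∈ Finset.range k, (f k ∩ f i)) := by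
      intro ν hν
      rw [← hinter]
      have h1 : ν (f k ∪ U) + ν (f k ∩ U) = ν (f k) + ν U :=
        measure_union_add_inter (f k) hUmeas
      have h2 : ν (f k ∩ U) ≠ ⊤ := measure_ne_top ν _
      exact ENNReal.eq_sub_of_add_eq h2 h1
    have tU : Tendsto (fun n => μs n U) atTop (nhds (μ U)) := ih f hf
    have tI : Tendsto (fun n => μs n (⋃ i ∈ Finset.range k, (f k ∩ f i))) atTop
        (nhds (μ (⋃ i ∈ Finset.range k, (f k ∩ f i)))) := ih _ hginter
    have tB : Tendsto (fun n => μs n (f k)) atTop (nhds (μ (f k))) :=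
      tendsto_of_isBE h (hf k)
    have tSum : Tendsto (fun n => μs n (f k) + μs n U) atTop (nhds (μ (f k) + μ U)) :=
      tB.add tU
    have tfinal : Tendsto
        (fun n => μs n (f k) + μs n U - μs n (⋃ i ∈ Finset.range k, (f k ∩ f i)))
        atTop (nhds (μ (f k) + μ U - μ (⋃ i ∈ Finset.range k, (f k ∩ f i)))) := by
      apply ENNReal.Tendsto.sub tSum tI
      left
      exact ENNReal.add_ne_top.mpr ⟨measure_ne_top μ _, measure_ne_top μ _⟩
    simp only [hU]
    have : ∀ n, μs n (f k ∪ U) =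
        μs n (f k) + μs n U - μs n (⋃ i ∈ Finset.range k, (f k ∩ f i)) :=
      fun n => key (μs n) (hμs n)
    rw [key μ hμ]
    exact tfinal.congr (fun n => (this n).symm)

private lemma open_le_liminf {μs : ℕ → Measure S} {μ : Measure S}
    [TopologicalSpace.SeparableSpace S]
    (hμs : ∀ n, IsProbabilityMeasure (μs n)) (hμ : IsProbabilityMeasure μ)
    (h : ∀ (x : S) (r : ℝ), 0 < r →
        Tendsto (fun n => μs n (Metric.ball x r)) atTop (nhds (μ (Metric.ball x r))))
    {G : Set S} (hG : IsOpen G) :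
    μ G ≤ atTop.liminf (fun n => μs n G) := by
  obtain ⟨D, Dcnt, Ddense⟩ := TopologicalSpace.exists_countable_dense S
  set I : Set (S × ℚ) := {p | p.1 ∈ D ∧ Metric.ball p.1 (p.2 : ℝ) ⊆ G} with hIdef
  have hIc : I.Countable := by
    have : I ⊆ D ×ˢ (Set.univ : Set ℚ) := fun p hp => ⟨hp.1, Set.mem_univ _⟩
    exact (Dcnt.prod (Set.to_countable _)).mono this
  have hcover : G = ⋃ p ∈ I, Metric.ball p.1 (p.2 : ℝ) := by
    apply Set.Subset.antisymm
    · intro x hx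
      obtain ⟨ε, hε, hball⟩ := Metric.isOpen_iff.mp hG x hx
      obtain ⟨q, hq0, hq⟩ := exists_rat_btwn (half_pos hε)
      have hq0' : (0 : ℝ) < q := hq0
      obtain ⟨c, hcD, hc⟩ := Metric.mem_closure_iff.mp (Ddense x) (q : ℝ) hq0'
      have hsub : Metric.ball c (q : ℝ) ⊆ G := by
        intro w hw
        apply hball
        have : dist w x ≤ dist w c + dist c x := dist_triangle w c x
        have hcx : dist c x < q := by rwa [dist_comm]
        have : dist w x < (q : ℝ) + q := lt_of_le_of_lt this (add_lt_add hw hcx)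
        have h2q : (q : ℝ) + q < ε := by linarith
        exact Metric.mem_ball.mpr (this.trans h2q)
      refine Set.mem_biUnion (show (c, q) ∈ I from ⟨hcD, hsub⟩) ?_
      simpa [Metric.mem_ball, dist_comm] using hc
    · exact Set.iUnion₂_subset fun p hp => hp.2
  rcases Set.eq_empty_or_nonempty I with hIe | hIne
  · rw [hcover, hIe]
    simp
  obtain ⟨g, hg⟩ := hIc.exists_eq_range hIne
  set f : ℕ → Set S := fun n => Metric.ball (g n).1 ((g n).2 : ℝ) with hfdef
  have hfBE : ∀ i, IsBE (f i) := fun i => Or.inr ⟨(g i).1, ((g i).2 : ℝ), rfl⟩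
  have hGf : G = ⋃ n, f n := by
    rw [hcover, hg]
    rw [Set.biUnion_range]
  set A : ℕ → Set S := fun k => ⋃ i ∈ Finset.range k, f i with hAdef
  have hAmono : Monotone A := by
    intro a b hab x hx
    simp only [hAdef, Set.mem_iUnion, Finset.mem_range, exists_prop] at hx ⊢
    obtain ⟨i, hi, hxi⟩ := hx
    exact ⟨i, lt_of_lt_of_le hi hab, hxi⟩
  have hAunion : (⋃ k, A k) = G := by
    rw [hGf]
    apply Set.Subset.antisymm
    · exact Set.iUnion_subset fun k =>
        Set.iUnion₂_subset fun i _ => Set.subset_iUnion f i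
    · intro x hx
      obtain ⟨n, hn⟩ := Set.mem_iUnion.mp hx
      exact Set.mem_iUnion.mpr ⟨n + 1, Set.mem_biUnion (Finset.mem_range.mpr (Nat.lt_succ_self n)) hn⟩
  have hμA : Tendsto (fun k => μ (A k)) atTop (nhds (μ G)) := by
    have := tendsto_measure_iUnion_atTop (μ := μ) hAmono
    rwa [hAunion] at this
  refine le_of_tendsto' hμA (fun k => ?_)
  have hTk : Tendsto (fun n => μs n (A k)) atTop (nhds (μ (A k))) :=
    tendsto_biUnion_of_isBE hμs hμ h k f hfBE
  have : μ (A k) = atTop.liminf (fun n => μs n (A k)) := hTk.liminf_eq.symm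
  rw [this]
  exact liminf_le_liminf (Filter.Eventually.of_forall fun n =>
    measure_mono (by rw [← hAunion]; exact Set.subset_iUnion A k))

end Aux

/-- on a separable ultrametric space, weak convergence of Borel probability
measures is equivalent to convergence of the masses of all open balls. -/
theorem weakConvergence_iff_ball_convergence
    {S : Type*} [MetricSpace S] [TopologicalSpace.SeparableSpace S]
    [MeasurableSpace S] [BorelSpace S]
    (hultra : ∀ x y z : S, dist x z ≤ max (dist x y) (dist y z))
    (μs : ℕ → Measure S) (μ : Measure S)
    (hμs : ∀ n, IsProbabilityMeasure (μs n)) (hμ : IsProbabilityMeasure μ) :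
    (∀ g : BoundedContinuousFunction S ℝ,
        Tendsto (fun n => ∫ x, g x ∂(μs n)) atTop (nhds (∫ x, g x ∂μ))) ↔
      (∀ (x : S) (r : ℝ), 0 < r →
        Tendsto (fun n => μs n (Metric.ball x r)) atTop (nhds (μ (Metric.ball x r)))) := by
  haveI : IsUltrametricDist S := ⟨hultra⟩
  set P : ℕ → ProbabilityMeasure S := fun n => ⟨μs n, hμs n⟩ with hP
  set Q : ProbabilityMeasure S := ⟨μ, hμ⟩ with hQ
  constructor
  · intro h x r hr
    have hPQ : Tendsto P atTop (nhds Q) :=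
      ProbabilityMeasure.tendsto_iff_forall_integral_tendsto.mpr h
    have := ProbabilityMeasure.tendsto_measure_of_null_frontier_of_tendsto' hPQ
      (E := Metric.ball x r)
      (by rw [IsUltrametricDist.frontier_ball_eq_empty]; simp)
    exact this
  · intro h
    have key : ∀ G, IsOpen G → μ G ≤ atTop.liminf (fun n => μs n G) :=
      fun G hG => open_le_liminf hμs hμ h hG
    have h_opens : ∀ G, IsOpen G → Q G ≤ atTop.liminf (fun i => P i G) := by
      intro G hG
      have aux : ENNReal.ofNNReal (atTop.liminf (fun i => P i G)) =
          atTop.liminf (ENNReal.ofNNReal ∘ fun i => P i G) := by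
        refine Monotone.map_liminf_of_continuousAt (F := atTop) ENNReal.coe_mono
          (fun i => P i G) ?_ ?_ ?_
        · exact ENNReal.continuous_coe.continuousAt
        · exact IsBoundedUnder.isCoboundedUnder_ge ⟨1, by simp⟩
        · exact ⟨0, by simp⟩
      rw [← ENNReal.coe_le_coe, aux]
      have h1 : (ENNReal.ofNNReal ∘ fun i => P i G) = fun n => μs n G := by
        funext n
        show ((P n G : NNReal) : ENNReal) = μs n G
        rw [ProbabilityMeasure.ennreal_coeFn_eq_coeFn_toMeasure]
        rfl
      have h2 : ((Q G : NNReal) : ENNReal) = μ G := by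
        rw [ProbabilityMeasure.ennreal_coeFn_eq_coeFn_toMeasure]
        rfl
      rw [h1, h2]
      exact key G hG
    exact ProbabilityMeasure.tendsto_iff_forall_integral_tendsto.mp
      (tendsto_of_forall_isOpen_le_liminf h_opens)
end

section
/- Let k ≥ 0 and n ≥ k+2, and let X be a homogeneous and spatially independent random subcomplex of Δₙ with q_k > 0. Then for any two k-simplices τ₁, τ₂ of Δₙ with #(τ₁ ∩ τ₂) = k, one has P(τ₁ ∈ X, τ₂ ∈ X) = q_k² / q_{k−1} > 0, and consequently s_k = r_k / r_{k−1}. -/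
open MeasureTheory Finset Filter


/-! By homogeneity, `P(τ ∈ X)` depends only on `#τ`, so it equals `q_{#τ-1}`. Spatial
independence applied to the full complexes `2^τ₁` and `2^τ₂` — their union lies in `X` iff
`τ₁, τ₂ ∈ X`, and their intersection is `2^(τ₁ ∩ τ₂)` — gives
`P(τ₁ ∈ X, τ₂ ∈ X) · q_{k-1} = q_k²`. Since `X` is a complex, `τ₁ ∪ τ₂ ∈ X` already forces
`τ₁, τ₂ ∈ X`, so `s_k = q_{k+1} q_{k-1} / q_k²`, while `r_j = q_{j+1} / q_j`. -/

open scoped Pointwise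

lemma SComplex.powerset_subset_iff {V : Type*} [DecidableEq V] {Y : Finset (Finset V)}
    (hY : SComplex Y) {τ : Finset V} : τ.powerset ⊆ Y ↔ τ ∈ Y :=
  ⟨fun h => h (Finset.mem_powerset_self τ), fun h _ hρ => hY.2 τ h _ hρ⟩

lemma sComplex_powerset {V : Type*} [DecidableEq V] (τ : Finset V) : SComplex τ.powerset :=
  ⟨Finset.empty_mem_powerset τ, fun _ hσ _ hρ =>
    Finset.mem_powerset.2 ((Finset.mem_powerset.1 hρ).trans (Finset.mem_powerset.1 hσ))⟩

lemma Finset.exists_perm_smul_eq {α : Type*} [DecidableEq α] {s t : Finset α}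
    (h : s.card = t.card) : ∃ g : Equiv.Perm α, g • s = t := by
  have := Set.powersetCard.isPretransitive (α := α) (n := t.card)
  obtain ⟨g, hg⟩ := MulAction.exists_smul_eq (Equiv.Perm α)
    (⟨s, h⟩ : Set.powersetCard α t.card) ⟨t, rfl⟩
  exact ⟨g, by simpa using congrArg Subtype.val hg⟩

lemma setOf_mem_subset_setOf_mem {n : ℕ} {Ω : Type*} {X : Ω → Finset (Finset (Fin n))}
    (hXc : ∀ ω, SComplex (X ω)) {τ σ : Finset (Fin n)} (h : τ ⊆ σ) :
    {ω | σ ∈ X ω} ⊆ {ω | τ ∈ X ω} :=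
  fun ω hω => (hXc ω).2 σ hω τ (Finset.mem_powerset.2 h)

section StdSimp

variable {n : ℕ}

lemma stdSimp_subset_stdSimp {j j' : ℤ} (h : j ≤ j') : stdSimp n j ⊆ stdSimp n j' := by
  intro v hv
  simp only [stdSimp, Finset.mem_filter, Finset.mem_univ, true_and] at hv ⊢
  omega

lemma stdSimp'_subset_stdSimp (k : ℕ) : stdSimp' n k ⊆ stdSimp n (k + 1) := by
  intro v hv
  simp only [stdSimp, stdSimp', Finset.mem_filter, Finset.mem_univ, true_and] at hv ⊢
  omega

lemma stdSimp_neg_one : stdSimp n (-1) = ∅ := by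
  ext v
  simp only [stdSimp, Finset.mem_filter, Finset.mem_univ, true_and, Finset.notMem_empty,
    iff_false, not_le]
  omega

lemma card_stdSimp_sub_one {m : ℕ} (hm : m ≤ n) : (stdSimp n ((m : ℤ) - 1)).card = m := by
  have hset : stdSimp n ((m : ℤ) - 1) = univ.filter (fun v : Fin n => (v : ℕ) < m) := by
    ext v
    simp only [stdSimp, Finset.mem_filter, Finset.mem_univ, true_and]
    omega
  rw [hset, Fin.card_filter_val_lt, min_eq_right hm]

lemma card_stdSimp {m : ℕ} (hm : m < n) : (stdSimp n m).card = m + 1 := by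
  simpa using card_stdSimp_sub_one (n := n) (m := m + 1) hm

lemma card_stdSimp' {k : ℕ} (hk : k + 1 < n) : (stdSimp' n k).card = k + 1 := by
  have hset : stdSimp' n k = Finset.Icc (⟨1, by omega⟩ : Fin n) ⟨k + 1, hk⟩ := by
    ext v
    simp only [stdSimp', Finset.mem_filter, Finset.mem_univ, true_and, Finset.mem_Icc,
      Fin.le_def]
  rw [hset, Fin.card_Icc]
  simp

lemma card_stdSimp_inter_stdSimp' {k : ℕ} (hk : k + 1 < n) :
    (stdSimp n k ∩ stdSimp' n k).card = k := by
  have hset : stdSimp n k ∩ stdSimp' n k = Finset.Icc (⟨1, by omega⟩ : Fin n) ⟨k, by omega⟩ := by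
    ext v
    simp only [stdSimp, stdSimp', Finset.mem_inter, Finset.mem_filter, Finset.mem_univ,
      true_and, Finset.mem_Icc, Fin.le_def]
    omega
  rw [hset, Fin.card_Icc]
  simp

end StdSimp

section Probability

variable {Ω : Type*} [MeasurableSpace Ω] {μ : Measure Ω}

lemma prb_setOf_eq_sum [IsFiniteMeasure μ] {β : Type*} [Fintype β] (Z : Ω → β)
    (hZ : ∀ b, MeasurableSet {ω | Z ω = b}) (p : β → Prop) [DecidablePred p] :
    prb μ {ω | p (Z ω)} = ∑ b with p b, prb μ {ω | Z ω = b} := by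
  have hset : {ω | p (Z ω)} = Z ⁻¹' ↑(univ.filter p) := by ext; simp
  rw [hset]
  exact (sum_measureReal_preimage_singleton _ fun b _ => hZ b).symm

end Probability

section RandomComplex

variable {n : ℕ} {Ω : Type*} [MeasurableSpace Ω] {μ : Measure Ω}
  {X : Ω → Finset (Finset (Fin n))}

lemma Homogeneous.prb_smul_mem [IsFiniteMeasure μ] (hhom : Homogeneous μ X)
    (hmeas : ∀ Y, MeasurableSet {ω | X ω = Y}) (g : Equiv.Perm (Fin n)) (τ : Finset (Fin n)) :
    prb μ {ω | g • τ ∈ X ω} = prb μ {ω | τ ∈ X ω} := by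
  rw [prb_setOf_eq_sum X hmeas (g • τ ∈ ·), prb_setOf_eq_sum X hmeas (τ ∈ ·)]
  refine Finset.sum_equiv (MulAction.toPerm g⁻¹) (fun Y => ?_) (fun Y _ => ?_)
  · simp [Finset.mem_inv_smul_finset_iff]
  · rw [← hhom g Y]
    congr 1
    ext ω
    exact smul_eq_iff_eq_inv_smul g

lemma qpar_eq_prb [IsProbabilityMeasure μ] (hXc : ∀ ω, SComplex (X ω)) {j : ℤ} (hj : -1 ≤ j) :
    qpar μ X j = prb μ {ω | stdSimp n j ∈ X ω} := by
  rcases hj.eq_or_lt with rfl | hj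
  · simp [qpar, stdSimp_neg_one, (hXc _).1, prb]
  · rw [qpar, if_neg (by omega)]

lemma Homogeneous.prb_mem_eq_qpar [IsProbabilityMeasure μ] (hhom : Homogeneous μ X)
    (hmeas : ∀ Y, MeasurableSet {ω | X ω = Y}) (hXc : ∀ ω, SComplex (X ω))
    (τ : Finset (Fin n)) : prb μ {ω | τ ∈ X ω} = qpar μ X ((τ.card : ℤ) - 1) := by
  obtain ⟨g, hg⟩ := Finset.exists_perm_smul_eq (card_stdSimp_sub_one (card_finset_fin_le τ))
  have h := hhom.prb_smul_mem hmeas g (stdSimp n ((τ.card : ℤ) - 1))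
  rw [hg] at h
  rw [h, qpar_eq_prb hXc (by omega)]

lemma qpar_anti [IsProbabilityMeasure μ] (hXc : ∀ ω, SComplex (X ω)) {j j' : ℤ} (hj : -1 ≤ j)
    (hjj' : j ≤ j') : qpar μ X j' ≤ qpar μ X j := by
  rw [qpar_eq_prb hXc hj, qpar_eq_prb hXc (hj.trans hjj')]
  exact measureReal_mono (setOf_mem_subset_setOf_mem hXc (stdSimp_subset_stdSimp hjj'))

lemma rpar_eq_div [IsProbabilityMeasure μ] (hXc : ∀ ω, SComplex (X ω)) {j : ℤ} (hj : -1 ≤ j)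
    (hq : 0 < qpar μ X j) : rpar μ X j = qpar μ X (j + 1) / qpar μ X j := by
  rw [rpar, if_pos hq, condP, qpar_eq_prb hXc hj, qpar_eq_prb hXc (by omega),
    Set.inter_eq_left.2 (setOf_mem_subset_setOf_mem hXc (stdSimp_subset_stdSimp (by omega)))]

lemma SpatInd.prb_inter_mul (hsi : SpatInd μ X) (hXc : ∀ ω, SComplex (X ω))
    (τ₁ τ₂ : Finset (Fin n)) :
    prb μ ({ω | τ₁ ∈ X ω} ∩ {ω | τ₂ ∈ X ω}) * prb μ {ω | τ₁ ∩ τ₂ ∈ X ω} =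
      prb μ {ω | τ₁ ∈ X ω} * prb μ {ω | τ₂ ∈ X ω} := by
  have hinter : τ₁.powerset ∩ τ₂.powerset = (τ₁ ∩ τ₂).powerset := by
    ext; simp only [Finset.mem_inter, Finset.mem_powerset, Finset.subset_inter_iff]
  have h := hsi _ _ (sComplex_powerset τ₁) (sComplex_powerset τ₂)
  simp only [Finset.union_subset_iff, hinter, (hXc _).powerset_subset_iff] at h
  exact h

lemma prb_mem_inter_mem_eq [IsProbabilityMeasure μ] (hhom : Homogeneous μ X)
    (hmeas : ∀ Y, MeasurableSet {ω | X ω = Y}) (hXc : ∀ ω, SComplex (X ω)) (hsi : SpatInd μ X)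
    {k : ℕ} (hq : 0 < qpar μ X k) {τ₁ τ₂ : Finset (Fin n)} (h₁ : τ₁.card = k + 1)
    (h₂ : τ₂.card = k + 1) (h₁₂ : (τ₁ ∩ τ₂).card = k) :
    prb μ ({ω | τ₁ ∈ X ω} ∩ {ω | τ₂ ∈ X ω}) = qpar μ X k ^ 2 / qpar μ X ((k : ℤ) - 1) := by
  have hq' : 0 < qpar μ X ((k : ℤ) - 1) := hq.trans_le (qpar_anti hXc (by omega) (by omega))
  have h := hsi.prb_inter_mul hXc τ₁ τ₂
  rw [hhom.prb_mem_eq_qpar hmeas hXc τ₁, hhom.prb_mem_eq_qpar hmeas hXc τ₂,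
    hhom.prb_mem_eq_qpar hmeas hXc (τ₁ ∩ τ₂), h₁, h₂, h₁₂, Nat.cast_succ,
    add_sub_cancel_right] at h
  rw [eq_div_iff hq'.ne', h, sq]

end RandomComplex

/-- for a homogeneous and spatially independent random subcomplex with
`q_k > 0`, `P(τ₁ ∈ X, τ₂ ∈ X) = q_k² / q_{k-1} > 0` for `k`-simplices `τ₁, τ₂` sharing
`k` vertices, and consequently `s_k = r_k / r_{k-1}`. -/
theorem spar_eq_rpar_div (n k : ℕ) (hn : k + 2 ≤ n)
    {Ω : Type*} [MeasurableSpace Ω] (μ : Measure Ω) [IsProbabilityMeasure μ]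
    (X : Ω → Finset (Finset (Fin n)))
    (hmeas : ∀ Y, MeasurableSet {ω | X ω = Y})
    (hXc : ∀ ω, SComplex (X ω))
    (hhom : Homogeneous μ X) (hsi : SpatInd μ X)
    (hq : 0 < qpar μ X (k : ℤ)) :
    (∀ τ₁ τ₂ : Finset (Fin n), τ₁.card = k + 1 → τ₂.card = k + 1 → (τ₁ ∩ τ₂).card = k →
      prb μ ({ω | τ₁ ∈ X ω} ∩ {ω | τ₂ ∈ X ω}) =
          qpar μ X (k : ℤ) ^ 2 / qpar μ X ((k : ℤ) - 1) ∧
        0 < prb μ ({ω | τ₁ ∈ X ω} ∩ {ω | τ₂ ∈ X ω})) ∧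
      spar μ X k = rpar μ X (k : ℤ) / rpar μ X ((k : ℤ) - 1) := by
  have hq' : 0 < qpar μ X ((k : ℤ) - 1) := hq.trans_le (qpar_anti hXc (by omega) (by omega))
  refine ⟨fun τ₁ τ₂ h₁ h₂ h₁₂ => ?_, ?_⟩
  · have h := prb_mem_inter_mem_eq hhom hmeas hXc hsi hq h₁ h₂ h₁₂
    exact ⟨h, by rw [h]; positivity⟩
  have hstd := prb_mem_inter_mem_eq hhom hmeas hXc hsi hq (card_stdSimp (by omega))
    (card_stdSimp' (by omega)) (card_stdSimp_inter_stdSimp' (by omega))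
  have hnum : {ω | stdSimp n ((k : ℤ) + 1) ∈ X ω} ∩
      ({ω | stdSimp n k ∈ X ω} ∩ {ω | stdSimp' n k ∈ X ω}) =
        {ω | stdSimp n ((k : ℤ) + 1) ∈ X ω} :=
    Set.inter_eq_left.2 (Set.subset_inter
      (setOf_mem_subset_setOf_mem hXc (stdSimp_subset_stdSimp (by omega)))
      (setOf_mem_subset_setOf_mem hXc (stdSimp'_subset_stdSimp k)))
  rw [spar, if_pos (by rw [hstd]; positivity), condP, hnum, hstd, ← qpar_eq_prb hXc (by omega),
    rpar_eq_div hXc (by omega) hq, rpar_eq_div hXc (by omega) hq', sub_add_cancel]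
  field_simp
end
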